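/- arXiv:2511.07835 — 6 statements merged into one kernel-verified Lean document; each statement's English description precedes it below -/
import Mathlib

section
/- Let X and Y be two real random variables, each supported on at most k distinct values. If the j-th raw moments of X and Y agree for all j = 1, 2, …, 2k−1, then X and Y have the same distribution. -/
open MeasureTheory

private lemma pow_integrable {Ω : Type*} [MeasurableSpace Ω] (μ : Measure Ω)
    [IsProbabilityMeasure μ] (X : Ω → ℝ) (hX : Measurable X) (s : Finset ℝ)
    (hXs : ∀ ω, X ω ∈ s) (j : ℕ) : Integrable (fun ω => X ω ^ j) μ := by
  refine (integrable_const (∑ x ∈ s, |x| ^ j)).mono'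
    (hX.pow_const j).aestronglyMeasurable (Filter.Eventually.of_forall fun ω => ?_)
  rw [Real.norm_eq_abs, abs_pow]
  exact Finset.single_le_sum (f := fun x => |x| ^ j)
    (fun x _ => pow_nonneg (abs_nonneg x) j) (hXs ω)

private lemma eval_integral {Ω : Type*} [MeasurableSpace Ω] (μ : Measure Ω)
    [IsProbabilityMeasure μ] (X : Ω → ℝ) (hX : Measurable X) (s : Finset ℝ)
    (hXs : ∀ ω, X ω ∈ s) (p : Polynomial ℝ) :
    ∫ ω, p.eval (X ω) ∂μ
      = ∑ j ∈ Finset.range (p.natDegree + 1), p.coeff j * ∫ ω, X ω ^ j ∂μ := by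
  have : ∀ ω, p.eval (X ω) = ∑ j ∈ Finset.range (p.natDegree + 1), p.coeff j * X ω ^ j := by
    intro ω; rw [Polynomial.eval_eq_sum_range]
  simp_rw [this]
  rw [integral_finset_sum]
  · exact Finset.sum_congr rfl fun j _ => integral_const_mul _ _
  · exact fun j _ => (pow_integrable μ X hX s hXs j).const_mul _

private lemma point_mass {Ω : Type*} [MeasurableSpace Ω] (μ : Measure Ω)
    [IsProbabilityMeasure μ] (X : Ω → ℝ) (hX : Measurable X) (s : Finset ℝ)
    (hXs : ∀ ω, X ω ∈ s) (a : ℝ) (ha : a ∈ s) :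
    (μ (X ⁻¹' {a})).toReal = ∫ ω, (Lagrange.basis s id a).eval (X ω) ∂μ := by
  have heval : ∀ ω, (Lagrange.basis s id a).eval (X ω)
      = Set.indicator (X ⁻¹' {a}) (fun _ => (1:ℝ)) ω := by
    intro ω
    by_cases h : X ω = a
    · have : ω ∈ X ⁻¹' {a} := h
      rw [Set.indicator_of_mem this, show X ω = id a from h,
        Lagrange.eval_basis_self (Set.injOn_id _) ha]
    · have : ω ∉ X ⁻¹' {a} := h
      rw [Set.indicator_of_notMem this, show X ω = id (X ω) from rfl,
        Lagrange.eval_basis_of_ne (fun hc => h hc.symm) (hXs ω)]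
  simp_rw [heval]
  rw [show (fun _ : Ω => (1:ℝ)) = fun _ => (1:ℝ) from rfl]
  exact (integral_indicator_one (hX (measurableSet_singleton a))).symm

theorem stmt1 {Ω : Type*} [MeasurableSpace Ω] (μ : Measure Ω) [IsProbabilityMeasure μ]
    (X Y : Ω → ℝ) (hX : Measurable X) (hY : Measurable Y) (k : ℕ)
    (sX sY : Finset ℝ) (hsX : sX.card ≤ k) (hsY : sY.card ≤ k)
    (hXs : ∀ ω, X ω ∈ sX) (hYs : ∀ ω, Y ω ∈ sY)
    (hmom : ∀ j, 1 ≤ j → j ≤ 2 * k - 1 →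
      ∫ ω, X ω ^ j ∂μ = ∫ ω, Y ω ^ j ∂μ) :
    Measure.map X μ = Measure.map Y μ := by
  classical
  set s : Finset ℝ := sX ∪ sY with hs
  have hXs' : ∀ ω, X ω ∈ s := fun ω => Finset.mem_union_left _ (hXs ω)
  have hYs' : ∀ ω, Y ω ∈ s := fun ω => Finset.mem_union_right _ (hYs ω)
  have hcard : s.card ≤ 2 * k := by
    calc s.card ≤ sX.card + sY.card := Finset.card_union_le _ _
    _ ≤ 2 * k := by omega
  -- key: point masses agree
  have key : ∀ a ∈ s, μ (X ⁻¹' {a}) = μ (Y ⁻¹' {a}) := by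
    intro a ha
    have hdeg : (Lagrange.basis s id a).natDegree = s.card - 1 :=
      Lagrange.natDegree_basis (Set.injOn_id _) ha
    have hmom' : ∀ j ∈ Finset.range ((Lagrange.basis s id a).natDegree + 1),
        ∫ ω, X ω ^ j ∂μ = ∫ ω, Y ω ^ j ∂μ := by
      intro j hj
      rcases Nat.eq_zero_or_pos j with rfl | hj1
      · simp
      · refine hmom j hj1 ?_
        rw [Finset.mem_range, hdeg] at hj
        have hone : 1 ≤ s.card := Finset.card_pos.mpr ⟨a, ha⟩
        omega
    have hreal : (μ (X ⁻¹' {a})).toReal = (μ (Y ⁻¹' {a})).toReal := by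
      rw [point_mass μ X hX s hXs' a ha, point_mass μ Y hY s hYs' a ha,
        eval_integral μ X hX s hXs' _, eval_integral μ Y hY s hYs' _]
      exact Finset.sum_congr rfl fun j hj => by rw [hmom' j hj]
    have h1 : μ (X ⁻¹' {a}) ≠ ⊤ := (measure_lt_top _ _).ne
    have h2 : μ (Y ⁻¹' {a}) ≠ ⊤ := (measure_lt_top _ _).ne
    exact (ENNReal.toReal_eq_toReal_iff' h1 h2).mp hreal
  -- conclude
  ext A hA
  rw [Measure.map_apply hX hA, Measure.map_apply hY hA]
  have decompose : ∀ (Z : Ω → ℝ), Measurable Z → (∀ ω, Z ω ∈ s) →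
      μ (Z ⁻¹' A) = ∑ a ∈ s.filter (· ∈ A), μ (Z ⁻¹' {a}) := by
    intro Z hZ hZs
    have hset : Z ⁻¹' A = ⋃ a ∈ s.filter (· ∈ A), Z ⁻¹' {a} := by
      ext ω
      simp only [Set.mem_preimage, Set.mem_iUnion, Finset.mem_filter, Set.mem_singleton_iff]
      constructor
      · intro h; exact ⟨Z ω, ⟨hZs ω, h⟩, rfl⟩
      · rintro ⟨a, ⟨_, haA⟩, rfl⟩; exact haA
    rw [hset]
    refine measure_biUnion_finset ?_ fun a _ => hZ (measurableSet_singleton a)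
    intro a _ b _ hab
    exact Set.disjoint_left.mpr fun ω h1 h2 => hab (h1.symm.trans h2)
  rw [decompose X hX hXs', decompose Y hY hYs']
  exact Finset.sum_congr rfl fun a ha => key a (Finset.mem_filter.mp ha).1
end

section
/- For any mean-zero real random variable Y with finite moments and any positive integer ℓ, the ℓ-th cumulant satisfies |κ_ℓ(Y)| ≤ E[|Y|^ℓ]·e^ℓ·ℓ!. -/
/-!
Strong induction along the recursion. With `M k = E|Y|^k`, each term of the recursion is
controlled by `|E Y^k| ≤ M k` and the log-convexity of absolute moments,
`M j * M (m - j) ≤ M m` (Hölder gives `M j ≤ (M m)^(j/m)` on a probability space). The resulting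
numerical recursion closes because `(m-1).choose (j-1) * j! ≤ m!` and `∑_{j<m} e^j ≤ e^m - 1`.
-/

open MeasureTheory Nat

theorem Nat.choose_mul_factorial_succ_le (n k : ℕ) : n.choose k * (k + 1)! ≤ (n + 1)! := by
  rcases le_or_gt k n with hkn | hnk
  · have hk : n.choose k * k ! ≤ n ! := by
      rw [← Nat.choose_mul_factorial_mul_factorial hkn]
      exact Nat.le_mul_of_pos_right _ (Nat.factorial_pos _)
    calc n.choose k * (k + 1)! = n.choose k * k ! * (k + 1) := by rw [factorial_succ]; ring
      _ ≤ n ! * (n + 1) := Nat.mul_le_mul hk (by omega)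
      _ = (n + 1)! := by rw [factorial_succ]; ring
  · simp [Nat.choose_eq_zero_of_lt hnk]

theorem Real.sum_range_exp_le (n : ℕ) : ∑ j ∈ Finset.range n, Real.exp j ≤ Real.exp n - 1 := by
  induction n with
  | zero => simp
  | succ n ih =>
    have h2 : (2 : ℝ) ≤ Real.exp 1 := by linarith [Real.add_one_le_exp 1]
    have hexp : Real.exp (n + 1 : ℕ) = Real.exp n * Real.exp 1 := by
      push_cast; exact Real.exp_add _ _
    rw [Finset.sum_range_succ, hexp]
    nlinarith [Real.exp_pos n]

theorem one_add_sum_choose_mul_exp_mul_factorial_le (m : ℕ) :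
    1 + ∑ j ∈ Finset.Ico 1 m, ((m - 1).choose (j - 1) : ℝ) * Real.exp j * j !
      ≤ Real.exp m * m ! := by
  have hterm : ∀ j ∈ Finset.Ico 1 m,
      ((m - 1).choose (j - 1) : ℝ) * Real.exp j * j ! ≤ m ! * Real.exp j := by
    intro j hj
    obtain ⟨hj1, hjm⟩ := Finset.mem_Ico.mp hj
    have hchoose : (m - 1).choose (j - 1) * j ! ≤ m ! := by
      simpa [Nat.sub_add_cancel hj1, Nat.sub_add_cancel (hj1.trans hjm.le)] using
        Nat.choose_mul_factorial_succ_le (m - 1) (j - 1)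
    have hchoose' : ((m - 1).choose (j - 1) : ℝ) * j ! ≤ m ! := by exact_mod_cast hchoose
    nlinarith [Real.exp_pos j]
  have hsum : ∑ j ∈ Finset.Ico 1 m, Real.exp j ≤ Real.exp m - 1 :=
    calc ∑ j ∈ Finset.Ico 1 m, Real.exp j ≤ ∑ j ∈ Finset.range m, Real.exp j :=
          Finset.sum_le_sum_of_subset_of_nonneg
            (fun j hj => Finset.mem_range.2 (Finset.mem_Ico.1 hj).2)
            fun _ _ _ => (Real.exp_pos _).le
      _ ≤ Real.exp m - 1 := Real.sum_range_exp_le m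
  have hfact : (1 : ℝ) ≤ m ! := by exact_mod_cast Nat.one_le_iff_ne_zero.2 (factorial_ne_zero m)
  calc 1 + ∑ j ∈ Finset.Ico 1 m, ((m - 1).choose (j - 1) : ℝ) * Real.exp j * j !
      ≤ 1 + m ! * ∑ j ∈ Finset.Ico 1 m, Real.exp j := by
        rw [Finset.mul_sum]; gcongr 1 + ?_; exact Finset.sum_le_sum hterm
    _ ≤ 1 + m ! * (Real.exp m - 1) := by gcongr
    _ ≤ Real.exp m * m ! := by nlinarith

theorem abs_le_mul_exp_mul_factorial_of_recursion {κ a M : ℕ → ℝ} {ℓ : ℕ}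
    (ha : ∀ k, |a k| ≤ M k) (hM : ∀ j k, j + k ≤ ℓ → M j * M k ≤ M (j + k))
    (hκ : ∀ m, 1 ≤ m → m ≤ ℓ →
      κ m = a m - ∑ j ∈ Finset.Ico 1 m, ((m - 1).choose (j - 1) : ℝ) * κ j * a (m - j))
    {m : ℕ} (hm : 1 ≤ m) (hmℓ : m ≤ ℓ) :
    |κ m| ≤ M m * Real.exp m * m ! := by
  induction m using Nat.strong_induction_on with
  | _ m ih =>
  have hterm : ∀ j ∈ Finset.Ico 1 m, |((m - 1).choose (j - 1) : ℝ) * κ j * a (m - j)|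
      ≤ ((m - 1).choose (j - 1) : ℝ) * Real.exp j * j ! * M m := by
    intro j hj
    obtain ⟨hj1, hjm⟩ := Finset.mem_Ico.mp hj
    have hκj := ih j hjm hj1 (hjm.le.trans hmℓ)
    have hprod : M j * M (m - j) ≤ M m := by
      simpa [Nat.add_sub_cancel' hjm.le] using hM j (m - j) (by omega)
    calc |((m - 1).choose (j - 1) : ℝ) * κ j * a (m - j)|
        = ((m - 1).choose (j - 1) : ℝ) * |κ j| * |a (m - j)| := by
          rw [abs_mul, abs_mul, Nat.abs_cast]
      _ ≤ ((m - 1).choose (j - 1) : ℝ) * (M j * Real.exp j * j !) * M (m - j) := by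
          gcongr
          · exact mul_nonneg (Nat.cast_nonneg _) ((abs_nonneg _).trans hκj)
          · exact ha _
      _ = ((m - 1).choose (j - 1) : ℝ) * Real.exp j * j ! * (M j * M (m - j)) := by ring
      _ ≤ ((m - 1).choose (j - 1) : ℝ) * Real.exp j * j ! * M m := by gcongr
  calc |κ m|
      ≤ |a m| + ∑ j ∈ Finset.Ico 1 m, |((m - 1).choose (j - 1) : ℝ) * κ j * a (m - j)| := by
        rw [hκ m hm hmℓ]
        exact (abs_sub _ _).trans (add_le_add le_rfl (Finset.abs_sum_le_sum_abs _ _))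
    _ ≤ M m + ∑ j ∈ Finset.Ico 1 m, ((m - 1).choose (j - 1) : ℝ) * Real.exp j * j ! * M m :=
        add_le_add (ha m) (Finset.sum_le_sum hterm)
    _ = M m * (1 + ∑ j ∈ Finset.Ico 1 m, ((m - 1).choose (j - 1) : ℝ) * Real.exp j * j !) := by
        rw [← Finset.sum_mul]; ring
    _ ≤ M m * (Real.exp m * m !) :=
        mul_le_mul_of_nonneg_left (one_add_sum_choose_mul_exp_mul_factorial_le m)
          ((abs_nonneg _).trans (ha m))
    _ = M m * Real.exp m * m ! := by ring

section Moments

variable {Ω : Type*} [MeasurableSpace Ω] {μ : Measure Ω}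

theorem abs_integral_pow_le_integral_abs_pow (Y : Ω → ℝ) (k : ℕ) :
    |∫ ω, Y ω ^ k ∂μ| ≤ ∫ ω, |Y ω| ^ k ∂μ := by
  simpa only [abs_pow] using abs_integral_le_integral_abs (f := fun ω => Y ω ^ k)

variable [IsProbabilityMeasure μ]

theorem lintegral_pow_le_lintegral_pow_rpow {f : Ω → ENNReal} (hf : AEMeasurable f μ) {k n : ℕ}
    (hkn : k ≤ n) (hn : n ≠ 0) :
    ∫⁻ ω, f ω ^ k ∂μ ≤ (∫⁻ ω, f ω ^ n ∂μ) ^ ((k : ℝ) / n) := by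
  have hn' : (n : ℝ) ≠ 0 := by exact_mod_cast hn
  have hholder := ENNReal.lintegral_mul_norm_pow_le (μ := μ) (hf.pow_const n)
    (aemeasurable_const (b := 1)) (p := k / n) (q := (n - k : ℕ) / n) (by positivity)
    (by positivity) (by rw [← add_div, Nat.cast_sub hkn]; field_simp; ring)
  have hpow : ∀ ω, (f ω ^ n) ^ ((k : ℝ) / n) = f ω ^ k := fun ω => by
    rw [← ENNReal.rpow_natCast _ n, ← ENNReal.rpow_mul, mul_div_cancel₀ _ hn',
      ENNReal.rpow_natCast]
  simpa [hpow] using hholder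

theorem lintegral_pow_mul_lintegral_pow_le {f : Ω → ENNReal} (hf : AEMeasurable f μ) (j k : ℕ) :
    (∫⁻ ω, f ω ^ j ∂μ) * ∫⁻ ω, f ω ^ k ∂μ ≤ ∫⁻ ω, f ω ^ (j + k) ∂μ := by
  rcases Nat.eq_zero_or_pos (j + k) with hjk | hjk
  · obtain ⟨rfl, rfl⟩ : j = 0 ∧ k = 0 := by omega
    simp
  set A := ∫⁻ ω, f ω ^ (j + k) ∂μ
  calc (∫⁻ ω, f ω ^ j ∂μ) * ∫⁻ ω, f ω ^ k ∂μ
      ≤ A ^ ((j : ℝ) / (j + k : ℕ)) * A ^ ((k : ℝ) / (j + k : ℕ)) := by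
        gcongr <;> exact lintegral_pow_le_lintegral_pow_rpow hf (by omega) hjk.ne'
    _ = A := by
        rw [← ENNReal.rpow_add_of_nonneg _ _ (by positivity) (by positivity), ← add_div,
          ← Nat.cast_add, div_self (by positivity), ENNReal.rpow_one]

theorem integral_abs_pow_mul_integral_abs_pow_le {Y : Ω → ℝ} (hY : AEMeasurable Y μ) {j k : ℕ}
    (hint : Integrable (fun ω => |Y ω| ^ (j + k)) μ) :
    (∫ ω, |Y ω| ^ j ∂μ) * ∫ ω, |Y ω| ^ k ∂μ ≤ ∫ ω, |Y ω| ^ (j + k) ∂μ := by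
  have hlin : ∀ i, ∫ ω, |Y ω| ^ i ∂μ = (∫⁻ ω, ENNReal.ofReal |Y ω| ^ i ∂μ).toReal := fun i => by
    rw [integral_eq_lintegral_of_nonneg_ae (Filter.Eventually.of_forall fun ω => by positivity)
      (hY.abs.pow_const i).aestronglyMeasurable]
    simp_rw [ENNReal.ofReal_pow (abs_nonneg _)]
  have hfin : ∫⁻ ω, ENNReal.ofReal |Y ω| ^ (j + k) ∂μ ≠ ⊤ := by
    simpa [ENNReal.ofReal_pow (abs_nonneg _)] using hint.lintegral_lt_top.ne
  rw [hlin, hlin, hlin, ← ENNReal.toReal_mul]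
  exact ENNReal.toReal_mono hfin
    (lintegral_pow_mul_lintegral_pow_le (ENNReal.measurable_ofReal.comp_aemeasurable hY.abs) j k)

end Moments

theorem stmt7_general {Ω : Type*} [MeasurableSpace Ω] (μ : Measure Ω) [IsProbabilityMeasure μ]
    (Y : Ω → ℝ) (hYm : Measurable Y) (ℓ : ℕ) (hℓ : 1 ≤ ℓ)
    (hint : ∀ j ≤ ℓ, Integrable (fun ω => |Y ω| ^ j) μ)
    (κ : ℕ → ℝ)
    (hκ : ∀ m, 1 ≤ m → m ≤ ℓ →
      κ m = (∫ ω, Y ω ^ m ∂μ) -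
        ∑ j ∈ Finset.Ico 1 m,
          ((m - 1).choose (j - 1) : ℝ) * κ j * ∫ ω, Y ω ^ (m - j) ∂μ) :
    |κ ℓ| ≤ (∫ ω, |Y ω| ^ ℓ ∂μ) * Real.exp ℓ * (Nat.factorial ℓ : ℝ) :=
  abs_le_mul_exp_mul_factorial_of_recursion (abs_integral_pow_le_integral_abs_pow Y)
    (fun _ _ hjk => integral_abs_pow_mul_integral_abs_pow_le hYm.aemeasurable (hint _ hjk))
    hκ hℓ le_rfl

theorem stmt7 {Ω : Type*} [MeasurableSpace Ω] (μ : Measure Ω) [IsProbabilityMeasure μ]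
    (Y : Ω → ℝ) (hYm : Measurable Y) (ℓ : ℕ) (hℓ : 1 ≤ ℓ)
    (hint : ∀ j ≤ ℓ, Integrable (fun ω => |Y ω| ^ j) μ)
    (hmean : ∫ ω, Y ω ∂μ = 0)
    (κ : ℕ → ℝ)
    (hκ : ∀ m, 1 ≤ m → m ≤ ℓ →
      κ m = (∫ ω, Y ω ^ m ∂μ) -
        ∑ j ∈ Finset.Ico 1 m,
          ((m - 1).choose (j - 1) : ℝ) * κ j * ∫ ω, Y ω ^ (m - j) ∂μ) :
    |κ ℓ| ≤ (∫ ω, |Y ω| ^ ℓ ∂μ) * Real.exp ℓ * (Nat.factorial ℓ : ℝ) :=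
  stmt7_general μ Y hYm ℓ hℓ hint κ hκ
end

section
/- Let d be an odd positive integer, and let p(x) = a_0 + a_1 x + … + a_d x^d be a real polynomial. Then there exists an extremum point η of the degree-d Chebyshev polynomial T_d in [−1,1] (a point with |T_d(η)| = 1) such that |p(η)| ≥ |a_1| / d. -/
/-!
Interpolating at the `d + 1` extrema `x_i = cos (i π / d)` of `T_d` writes the linear coefficient
of any polynomial `P` of degree at most `d` as `P.coeff 1 = ∑ λ_i P(x_i)`, where `λ_i` is the
linear coefficient of the `i`-th Lagrange basis polynomial. For odd `d` the nodes are symmetric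
about `0` and avoid it, so the nodal polynomial is even and `λ_i` is a fixed multiple of
`w_i / x_i ^ 2`, where `w_i` is the barycentric weight, whose sign is `(-1) ^ i`. Hence the `λ_i`
alternate in sign exactly like `T_d(x_i) = (-1) ^ i`, and
`∑ |λ_i| = |∑ λ_i T_d(x_i)| = |T_d'(0)| = d`. Therefore
`|P.coeff 1| ≤ d · max_i |P(x_i)|`.
-/

open Polynomial Finset Real

theorem Finset.sum_abs_eq_abs_sum_of_eq_mul_nonneg {R ι : Type*} [Ring R] [LinearOrder R]
    [IsOrderedRing R] {s : Finset ι} {f g : ι → R} (c : R) (hg : ∀ i ∈ s, 0 ≤ g i) (hf : ∀ i ∈ s, f i = c * g i) :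
    ∑ i ∈ s, |f i| = |∑ i ∈ s, f i| := by
  rw [sum_congr rfl hf, ← mul_sum, abs_mul, abs_sum_of_nonneg hg, mul_sum]
  refine sum_congr rfl fun i hi => ?_
  rw [hf i hi, abs_mul, abs_of_nonneg (hg i hi)]

theorem Polynomial.coeff_one_eq_zero_of_comp_neg_X_eq {R : Type*} [CommRing R]
    [NoZeroDivisors R] [CharZero R] {p : R[X]} (hp : p.comp (-X) = p) : p.coeff 1 = 0 := by
  have h := congrArg (coeff · 1) hp
  simp only [← neg_one_mul (X : R[X]), ← C_1, ← C_neg, comp_C_mul_X_coeff, pow_one,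
    mul_neg_one] at h
  exact self_eq_neg.mp h.symm

namespace Lagrange

theorem nodal_comp_neg_X {R ι : Type*} [CommRing R] {s : Finset ι} {v : ι → R} (σ : ι → ι)
    (hσ : ∀ i ∈ s, σ i ∈ s) (hσσ : ∀ i ∈ s, σ (σ i) = i) (hv : ∀ i ∈ s, v (σ i) = -v i) :
    (nodal s v).comp (-X) = (-1) ^ #s * nodal s v := by
  have hreflect : ∏ i ∈ s, (X + C (v i)) = nodal s v := by
    refine prod_nbij' σ σ hσ hσ hσσ hσσ fun i hi => ?_
    rw [hv i hi, map_neg, sub_neg_eq_add]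
  conv_rhs => rw [← hreflect]
  rw [nodal_eq, Polynomial.prod_comp, ← prod_const, ← prod_mul_distrib]
  refine prod_congr rfl fun i _ => ?_
  simp only [sub_comp, X_comp, C_comp]
  ring

variable {F ι : Type*} [Field F] [DecidableEq ι] {s : Finset ι} {v : ι → F} {i : ι}

theorem coeff_eq_sum_eval_mul_coeff_basis (hvs : Set.InjOn v s) {P : F[X]} (hP : P.degree < #s)
    (n : ℕ) : P.coeff n = ∑ i ∈ s, P.eval (v i) * (Lagrange.basis s v i).coeff n := by
  conv_lhs => rw [eq_interpolate hvs hP, interpolate_apply, finsetSum_coeff]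
  simp only [coeff_C_mul]

theorem coeff_one_basis (hi : i ∈ s) (hN : (nodal s v).coeff 1 = 0) (hvi : v i ≠ 0) :
    (Lagrange.basis s v i).coeff 1 = -(nodalWeight s v i * (nodal s v).eval 0) / v i ^ 2 := by
  set E := nodal (s.erase i) v
  have hsplit : nodal s v = X * E - C (v i) * E := by rw [nodal_eq_mul_nodal_erase hi, sub_mul]
  have hE : E.coeff 0 = v i * E.coeff 1 := by
    simpa [hsplit, coeff_X_mul_zero, sub_eq_zero] using hN
  rw [basis_eq_prod_sub_inv_mul_nodal_div hi, ← nodal_erase_eq_nodal_div hi, coeff_C_mul, hsplit]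
  simp only [eval_sub, eval_mul, eval_X, eval_C, zero_mul, zero_sub, ← coeff_zero_eq_eval_zero, hE]
  field_simp
  ring

end Lagrange

namespace Polynomial.Chebyshev

open Lagrange

theorem node_sub {n i : ℕ} (hn : n ≠ 0) (hi : i ≤ n) : node n (n - i) = -node n i := by
  rw [node, node, ← cos_pi_sub, Nat.cast_sub hi]
  congr 1
  field_simp

theorem node_ne_zero {n : ℕ} (hn : Odd n) {i : ℕ} (hi : i ≤ n) : node n i ≠ 0 := by
  intro h
  have hT := eval_T_real_node (mem_Iic.mpr hi)
  rw [h, T_eval_zero, if_neg (by exact_mod_cast Nat.not_even_iff_odd.mpr hn)] at hT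
  push_cast at hT
  exact pow_ne_zero i (by norm_num : (-1 : ℝ) ≠ 0) hT.symm

theorem abs_coeff_one_T {n : ℕ} (hn : Odd n) : |(T ℝ n).coeff 1| = n := by
  obtain ⟨m, rfl⟩ := hn
  have hU : (U ℝ ((2 * m + 1 : ℕ) - 1 : ℤ)).eval 0 = (m : ℤ).negOnePow := by
    push_cast
    rw [add_sub_cancel_right, U_eval_two_mul_zero]
  have h := coeff_derivative (T ℝ (2 * m + 1 : ℕ)) 0
  rw [coeff_zero_eq_eval_zero, T_derivative_eq_U, eval_mul, hU, eval_intCast] at h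
  simp only [Nat.cast_zero, zero_add, mul_one] at h
  rw [← h, abs_mul, abs_unit_intCast, mul_one, Int.cast_natCast, Nat.abs_cast]

theorem coeff_one_nodal_node {n : ℕ} (hn : Odd n) :
    (nodal (range (n + 1)) (node n)).coeff 1 = 0 := by
  refine coeff_one_eq_zero_of_comp_neg_X_eq ?_
  rw [nodal_comp_neg_X (n - ·) (by simp) (by simp; omega)
    (fun i hi => node_sub hn.pos.ne' (mem_range_succ_iff.mp hi)), card_range,
    (Nat.even_add_one.mpr (Nat.not_even_iff_odd.mpr hn)).neg_one_pow, one_mul]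

theorem neg_one_pow_mul_nodalWeight_node_pos {n i : ℕ} (hi : i ≤ n) :
    0 < (-1) ^ i * nodalWeight (range (n + 1)) (node n) i := by
  have := inv_pos_of_pos (zero_lt_prod_node_sub_node hi)
  rwa [mul_inv, ← inv_pow, inv_neg_one, ← prod_inv_distrib] at this

noncomputable def coeffOneWeight (n i : ℕ) : ℝ :=
  (Lagrange.basis (range (n + 1)) (node n) i).coeff 1

theorem coeff_one_eq_sum_node {n : ℕ} {P : ℝ[X]} (hP : P.degree ≤ n) :
    P.coeff 1 = ∑ i ∈ range (n + 1), P.eval (node n i) * coeffOneWeight n i := by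
  refine coeff_eq_sum_eval_mul_coeff_basis (strictAntiOn_node n).injOn ?_ 1
  grw [hP, card_range]
  exact_mod_cast n.lt_succ_self

theorem neg_one_pow_mul_coeffOneWeight {n i : ℕ} (hn : Odd n) (hi : i ≤ n) :
    (-1) ^ i * coeffOneWeight n i = -(nodal (range (n + 1)) (node n)).eval 0 *
      ((-1) ^ i * nodalWeight (range (n + 1)) (node n) i / node n i ^ 2) := by
  rw [coeffOneWeight, coeff_one_basis (mem_range_succ_iff.mpr hi) (coeff_one_nodal_node hn)
    (node_ne_zero hn hi)]
  ring

theorem sum_abs_coeffOneWeight {n : ℕ} (hn : Odd n) :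
    ∑ i ∈ range (n + 1), |coeffOneWeight n i| = n := by
  calc ∑ i ∈ range (n + 1), |coeffOneWeight n i|
      = ∑ i ∈ range (n + 1), |(-1) ^ i * coeffOneWeight n i| := by
        simp only [abs_mul, abs_neg_one_pow, one_mul]
    _ = |∑ i ∈ range (n + 1), (-1) ^ i * coeffOneWeight n i| := by
        refine sum_abs_eq_abs_sum_of_eq_mul_nonneg _ (fun i hi => ?_)
          (fun i hi => neg_one_pow_mul_coeffOneWeight hn (mem_range_succ_iff.mp hi))
        exact div_nonneg (neg_one_pow_mul_nodalWeight_node_pos (mem_range_succ_iff.mp hi)).le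
          (sq_nonneg _)
    _ = |(T ℝ n).coeff 1| := by
        rw [coeff_one_eq_sum_node (by rw [degree_T, Int.natAbs_natCast])]
        refine congrArg _ (sum_congr rfl fun i hi => ?_)
        rw [eval_T_real_node (mem_Iic.mpr (mem_range_succ_iff.mp hi))]
    _ = n := abs_coeff_one_T hn

theorem exists_abs_coeff_one_le {n : ℕ} (hn : Odd n) {P : ℝ[X]} (hP : P.degree ≤ n) :
    ∃ i ≤ n, |P.coeff 1| ≤ n * |P.eval (node n i)| := by
  obtain ⟨k, hk, hmax⟩ := exists_max_image (range (n + 1)) (fun i => |P.eval (node n i)|)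
    nonempty_range_add_one
  refine ⟨k, mem_range_succ_iff.mp hk, ?_⟩
  calc |P.coeff 1| ≤ ∑ i ∈ range (n + 1), |P.eval (node n i)| * |coeffOneWeight n i| := by
        rw [coeff_one_eq_sum_node hP]
        simpa only [abs_mul] using
          abs_sum_le_sum_abs (fun i => P.eval (node n i) * coeffOneWeight n i) (range (n + 1))
    _ ≤ ∑ i ∈ range (n + 1), |P.eval (node n k)| * |coeffOneWeight n i| :=
        sum_le_sum fun i hi => mul_le_mul_of_nonneg_right (hmax i hi) (abs_nonneg _)
    _ = n * |P.eval (node n k)| := by rw [← mul_sum, sum_abs_coeffOneWeight hn, mul_comm]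

end Polynomial.Chebyshev

open Polynomial.Chebyshev in
theorem stmt8_general (d : ℕ) (hd : Odd d) (a : ℕ → ℝ) :
    ∃ η ∈ Set.Icc (-1 : ℝ) 1,
      |(Polynomial.Chebyshev.T ℝ d).eval η| = 1 ∧
      |a 1| / d ≤ |∑ i ∈ Finset.range (d + 1), a i * η ^ i| := by
  set p : ℝ[X] := ∑ i ∈ range (d + 1), C (a i) * X ^ i
  have hp : p.degree ≤ d := by
    have := degree_sum_fin_lt fun i : Fin (d + 1) => a i
    rw [Fin.sum_univ_eq_sum_range (fun i => C (a i) * X ^ i)] at this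
    exact Order.le_of_lt_succ this
  have hcoeff : p.coeff 1 = a 1 := by
    simp [p, finsetSum_coeff, hd.pos]
  obtain ⟨k, hk, hbound⟩ := exists_abs_coeff_one_le hd hp
  refine ⟨node d k, node_mem_Icc, by simp [eval_T_real_node (mem_Iic.mpr hk)], ?_⟩
  rw [div_le_iff₀ (by exact_mod_cast hd.pos), mul_comm, ← hcoeff]
  simpa [p, eval_finsetSum] using hbound

theorem stmt8 (d : ℕ) (hd : Odd d) (hd0 : 0 < d) (a : ℕ → ℝ) :
    ∃ η ∈ Set.Icc (-1 : ℝ) 1,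
      |(Polynomial.Chebyshev.T ℝ d).eval η| = 1 ∧
      |a 1| / d ≤ |∑ i ∈ Finset.range (d + 1), a i * η ^ i| :=
  stmt8_general d hd a
end

section
/- Under the same hypotheses (finitely supported X with mean 0, variance 1, minimum outcome probability λ ≤ 1/2; f multilinear of degree at most d with ‖f‖_2 = 1), setting t_0 = (2e/λ)^d one has E[f(X^{⊗n})²·1{|f(X^{⊗n})| > t_0}] ≤ 0.52. -/
/-!
Bonami's lemma: if `X` is centred, has variance one and `|X| ≤ M` almost surely, then every
multilinear `f` of degree `≤ d` in i.i.d. copies of `X` satisfies `E f⁴ ≤ Qᵈ (E f²)²` as soon as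
`Q ≥ max 16 (3M²)`. Writing `f = g + x₀ h` with `g`, `h` free of `x₀` and integrating out `x₀`
leaves `E g⁴ + 6 E g²h² + 4 E[g h³] E X³ + E h⁴ E X⁴`; the third-moment term is absorbed by
AM-GM and the mixed term by Cauchy–Schwarz, so induction on the number of variables closes.

Every atom of `X` has mass `≥ λ` and the variance is one, so `|X| ≤ λ^{-1/2}`, and `Q = 8/λ`
is admissible because `λ ≤ 1/2`. Markov's inequality for `f⁴` then gives
`E[f² 1{|f| > t₀}] ≤ E f⁴ / t₀² ≤ (8/λ)ᵈ / t₀² = (2λ/e²)ᵈ ≤ 1/e² < 0.52`.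
-/

open MeasureTheory

/-- Evaluation of a multilinear polynomial given by its coefficients on subsets of `Fin n`. -/
noncomputable def mlEval {n : ℕ} (coeff : Finset (Fin n) → ℝ) (x : Fin n → ℝ) : ℝ :=
  ∑ S : Finset (Fin n), coeff S * ∏ i ∈ S, x i

open Finset

theorem Fin.sum_finset_succ {β : Type*} [AddCommMonoid β] {n : ℕ}
    (F : Finset (Fin (n + 1)) → β) :
    ∑ S, F S = ∑ T : Finset (Fin n),
      (F (T.map (Fin.succEmb n)) + F (insert 0 (T.map (Fin.succEmb n)))) := by
  rw [← powerset_univ, Fin.univ_succ, cons_eq_insert, sum_powerset_insert (by simp),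
    ← sum_add_distrib, map_eq_image, powerset_image, sum_image, powerset_univ]
  · simp [map_eq_image]
  · exact fun _ _ _ _ h => image_injective (Fin.succ_injective n) h

theorem integral_pi_fin_succ {n : ℕ} {α E : Type*} [MeasurableSpace α] [NormedAddCommGroup E]
    [NormedSpace ℝ E] (μ : Measure α) [SigmaFinite μ] {F : (Fin (n + 1) → α) → E}
    (hF : Integrable F (Measure.pi fun _ => μ)) :
    ∫ y, F y ∂(Measure.pi fun _ => μ) = ∫ x, ∫ t, F (Fin.cons t x) ∂μ ∂(Measure.pi fun _ => μ) := by
  have he := (measurePreserving_piFinSuccAbove (fun _ : Fin (n + 1) => μ) 0).symm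
  rw [← he.integral_comp', integral_prod_symm]
  · simp only [MeasurableEquiv.piFinSuccAbove_symm_apply, Fin.insertNthEquiv_zero]
    rfl
  · exact he.integrable_comp_emb (MeasurableEquiv.measurableEmbedding _) |>.2 hF

theorem sq_integral_mul_le {α : Type*} [MeasurableSpace α] {ν : Measure α} {f g : α → ℝ}
    (hf : Integrable (fun x => f x ^ 2) ν) (hg : Integrable (fun x => g x ^ 2) ν)
    (hfg : Integrable (fun x => f x * g x) ν) :
    (∫ x, f x * g x ∂ν) ^ 2 ≤ (∫ x, f x ^ 2 ∂ν) * ∫ x, g x ^ 2 ∂ν := by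
  have hquad : ∀ u : ℝ, 0 ≤ (∫ x, f x ^ 2 ∂ν) * (u * u) + (-2 * ∫ x, f x * g x ∂ν) * u
      + ∫ x, g x ^ 2 ∂ν := fun u => by
    have h1 : Integrable (fun x => u * u * f x ^ 2 + -2 * u * (f x * g x)) ν :=
      (hf.const_mul _).add (hfg.const_mul _)
    calc 0 ≤ ∫ x, (u * f x - g x) ^ 2 ∂ν := integral_nonneg fun x => sq_nonneg _
      _ = ∫ x, (u * u * f x ^ 2 + -2 * u * (f x * g x) + g x ^ 2) ∂ν := by
          congr 1 with x; ring
      _ = _ := by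
          rw [integral_add h1 hg, integral_add (hf.const_mul _) (hfg.const_mul _),
            integral_const_mul, integral_const_mul]
          ring
  have := discrim_le_zero hquad
  rw [discrim] at this
  linarith

theorem integral_pow_four_le_of_forall_eq {α : Type*} [MeasurableSpace α] {ν : Measure α}
    [IsProbabilityMeasure ν] {f : α → ℝ} {a : ℝ} (hf : ∀ x, f x = a) {Q : ℝ} (hQ : 1 ≤ Q)
    (d : ℕ) : ∫ x, f x ^ 4 ∂ν ≤ Q ^ d * (∫ x, f x ^ 2 ∂ν) ^ 2 := by
  simp only [hf, integral_const, probReal_univ, one_smul]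
  nlinarith [one_le_pow₀ (n := d) hQ, pow_nonneg (sq_nonneg a) 2]

theorem integral_sq_ite_lt_abs_le {α : Type*} [MeasurableSpace α] {ν : Measure α} {f : α → ℝ}
    (hf : Integrable (fun x => f x ^ 4) ν) {s : ℝ} (hs : 0 < s) :
    ∫ x, (if s < |f x| then f x ^ 2 else 0) ∂ν ≤ (∫ x, f x ^ 4 ∂ν) / s ^ 2 := by
  rw [← integral_div]
  refine integral_mono_of_nonneg
    (.of_forall fun x => by simp only [Pi.zero_apply]; split_ifs <;> positivity)
    (hf.div_const _) (.of_forall fun x => ?_)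
  dsimp only
  split_ifs with hx
  · have hsx : s ^ 2 ≤ f x ^ 2 := by simpa only [sq_abs] using pow_le_pow_left₀ hs.le hx.le 2
    rw [le_div_iff₀ (by positivity)]
    nlinarith [sq_nonneg (f x)]
  · positivity

theorem ae_measure_singleton_ne_zero {α : Type*} [MeasurableSpace α] {μ : Measure α}
    {s : Set α} (hs : s.Countable) (hμ : ∀ᵐ x ∂μ, x ∈ s) : ∀ᵐ x ∂μ, μ {x} ≠ 0 := by
  have hnull : ∀ᵐ x ∂μ, x ∈ s → μ {x} ≠ 0 := by
    rw [ae_iff]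
    push Not
    rw [← Set.biUnion_of_singleton {x | x ∈ s ∧ μ {x} = 0},
      measure_biUnion_null_iff (hs.mono fun x hx => hx.1)]
    exact fun x hx => hx.2
  filter_upwards [hμ, hnull] with x hx h using h hx

theorem measureReal_singleton_mul_sq_le {μ : Measure ℝ} (h : Integrable (fun x => x ^ 2) μ)
    (t : ℝ) : μ.real {t} * t ^ 2 ≤ ∫ x, x ^ 2 ∂μ := by
  rw [← smul_eq_mul, ← integral_singleton (fun x => x ^ 2)]
  exact setIntegral_le_integral h (.of_forall fun x => sq_nonneg x)

section MultilinearPolynomial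

variable {n : ℕ}

@[fun_prop]
theorem measurable_mlEval (c : Finset (Fin n) → ℝ) : Measurable (mlEval c) := by
  unfold mlEval
  fun_prop

theorem mlEval_of_degree_zero {c : Finset (Fin n) → ℝ} (hc : ∀ S, 0 < S.card → c S = 0)
    (x : Fin n → ℝ) : mlEval c x = c ∅ := by
  rw [mlEval, sum_eq_single_of_mem ∅ (mem_univ _) fun S _ hS => by
    rw [hc S (card_pos.2 (nonempty_iff_ne_empty.2 hS)), zero_mul], prod_empty, mul_one]

def coeffTail (c : Finset (Fin (n + 1)) → ℝ) (T : Finset (Fin n)) : ℝ :=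
  c (T.map (Fin.succEmb n))

def coeffDeriv (c : Finset (Fin (n + 1)) → ℝ) (T : Finset (Fin n)) : ℝ :=
  c (insert 0 (T.map (Fin.succEmb n)))

theorem mlEval_cons (c : Finset (Fin (n + 1)) → ℝ) (t : ℝ) (x : Fin n → ℝ) :
    mlEval c (Fin.cons t x) = mlEval (coeffTail c) x + t * mlEval (coeffDeriv c) x := by
  simp only [mlEval, Fin.sum_finset_succ, coeffTail, coeffDeriv, mul_sum, ← sum_add_distrib]
  refine sum_congr rfl fun T _ => ?_
  rw [prod_insert (by simp), prod_map]
  simp only [Fin.coe_succEmb, Fin.cons_zero, Fin.cons_succ]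
  ring

theorem coeffTail_eq_zero {d : ℕ} {c : Finset (Fin (n + 1)) → ℝ}
    (hc : ∀ S, d < S.card → c S = 0) (T : Finset (Fin n)) (hT : d < T.card) :
    coeffTail c T = 0 :=
  hc _ (by rwa [card_map])

theorem coeffDeriv_eq_zero {d : ℕ} {c : Finset (Fin (n + 1)) → ℝ}
    (hc : ∀ S, d + 1 < S.card → c S = 0) (T : Finset (Fin n)) (hT : d < T.card) :
    coeffDeriv c T = 0 :=
  hc _ (by rw [card_insert_of_notMem (by simp), card_map]; omega)

theorem ae_abs_mlEval_le {μ : Measure ℝ} [SigmaFinite μ] {M : ℝ} (hM : ∀ᵐ t ∂μ, |t| ≤ M)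
    (c : Finset (Fin n) → ℝ) :
    ∀ᵐ x ∂(Measure.pi fun _ : Fin n => μ), |mlEval c x| ≤ ∑ S, |c S| * M ^ S.card := by
  have hx : ∀ᵐ x ∂(Measure.pi fun _ : Fin n => μ), ∀ i, |x i| ≤ M :=
    ae_all_iff.2 fun i => (Measure.tendsto_eval_ae_ae (μ := fun _ => μ) (i := i)).eventually
      (p := (|·| ≤ M)) hM
  filter_upwards [hx] with x hx
  refine (abs_sum_le_sum_abs _ _).trans <| sum_le_sum fun S _ => ?_
  rw [abs_mul, abs_prod, ← prod_const]
  exact mul_le_mul_of_nonneg_left (prod_le_prod (fun i _ => abs_nonneg _) fun i _ => hx i)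
    (abs_nonneg _)

end MultilinearPolynomial

section Integrability

variable {n : ℕ} {μ : Measure ℝ} [IsFiniteMeasure μ] {M : ℝ}

theorem integrable_pow_of_ae_abs_le (hM : ∀ᵐ t ∂μ, |t| ≤ M) (k : ℕ) :
    Integrable (fun t : ℝ => t ^ k) μ :=
  .of_bound (by fun_prop) (M ^ k) <| by
    filter_upwards [hM] with t ht
    rw [Real.norm_eq_abs, abs_pow]
    exact pow_le_pow_left₀ (abs_nonneg t) ht k

theorem integrable_mlEval_pow_mul_pow (hM : ∀ᵐ t ∂μ, |t| ≤ M) (c c' : Finset (Fin n) → ℝ)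
    (k l : ℕ) :
    Integrable (fun x => mlEval c x ^ k * mlEval c' x ^ l) (Measure.pi fun _ : Fin n => μ) := by
  refine .of_bound (by fun_prop)
    ((∑ S, |c S| * M ^ S.card) ^ k * (∑ S, |c' S| * M ^ S.card) ^ l) ?_
  filter_upwards [ae_abs_mlEval_le hM c, ae_abs_mlEval_le hM c'] with x hx hx'
  rw [Real.norm_eq_abs, abs_mul, abs_pow, abs_pow]
  exact mul_le_mul (pow_le_pow_left₀ (abs_nonneg _) hx k) (pow_le_pow_left₀ (abs_nonneg _) hx' l)
    (by positivity) (pow_nonneg ((abs_nonneg _).trans hx) k)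

theorem integrable_mlEval_pow (hM : ∀ᵐ t ∂μ, |t| ≤ M) (c : Finset (Fin n) → ℝ) (k : ℕ) :
    Integrable (fun x => mlEval c x ^ k) (Measure.pi fun _ : Fin n => μ) := by
  simpa using integrable_mlEval_pow_mul_pow hM c c k 0

end Integrability

section OneVariable

variable {μ : Measure ℝ} [IsProbabilityMeasure μ] {M : ℝ}

theorem integral_quadratic (hM : ∀ᵐ t ∂μ, |t| ≤ M) (hmean : ∫ t, t ∂μ = 0)
    (hvar : ∫ t, t ^ 2 ∂μ = 1) (p q r : ℝ) : ∫ t, (p + t * q + t ^ 2 * r) ∂μ = p + r := by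
  have h1 : Integrable (fun t : ℝ => t * q) μ := by
    simpa using (integrable_pow_of_ae_abs_le hM 1).mul_const q
  have h01 : Integrable (fun t : ℝ => p + t * q) μ := (integrable_const p).add h1
  rw [integral_add h01 ((integrable_pow_of_ae_abs_le hM 2).mul_const r),
    integral_add (integrable_const p) h1, integral_mul_const, integral_mul_const, hmean, hvar]
  simp

theorem integral_add_mul_sq (hM : ∀ᵐ t ∂μ, |t| ≤ M) (hmean : ∫ t, t ∂μ = 0)
    (hvar : ∫ t, t ^ 2 ∂μ = 1) (a b : ℝ) : ∫ t, (a + t * b) ^ 2 ∂μ = a ^ 2 + b ^ 2 := by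
  rw [← integral_quadratic hM hmean hvar _ (2 * a * b)]
  congr 1 with t
  ring

/-- The cubic term `4 a b³ t³` is absorbed by AM-GM into the quadratic and quartic ones,
and `t⁴ ≤ M² t²`. -/
theorem integral_add_mul_pow_four_le (hM : ∀ᵐ t ∂μ, |t| ≤ M) (hmean : ∫ t, t ∂μ = 0)
    (hvar : ∫ t, t ^ 2 ∂μ = 1) (a b : ℝ) :
    ∫ t, (a + t * b) ^ 4 ∂μ ≤ a ^ 4 + 8 * (a ^ 2 * b ^ 2) + 3 * M ^ 2 * b ^ 4 := by
  rw [add_assoc, ← integral_quadratic hM hmean hvar _ (4 * a ^ 3 * b)]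
  refine integral_mono_of_nonneg (.of_forall fun t => by positivity) ?_ ?_
  · have h1 : Integrable (fun t : ℝ => t * (4 * a ^ 3 * b)) μ := by
      simpa using (integrable_pow_of_ae_abs_le hM 1).mul_const _
    exact ((integrable_const _).add h1).add ((integrable_pow_of_ae_abs_le hM 2).mul_const _)
  filter_upwards [hM] with t ht
  have ht2 : t ^ 2 ≤ M ^ 2 := sq_le_sq' (abs_le.1 ht).1 (abs_le.1 ht).2
  nlinarith [sq_nonneg (a * b * t - b ^ 2 * t ^ 2), mul_le_mul_of_nonneg_left ht2
    (by positivity : 0 ≤ 3 * b ^ 4 * t ^ 2)]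

end OneVariable

/-- Cauchy–Schwarz bounds the cross term by `√(G H) ≤ √Q K a b`, and `√Q ≥ 4`. -/
theorem fourth_moment_step {Q K M a b G H C : ℝ} (hQ : 16 ≤ Q) (hQM : 3 * M ^ 2 ≤ Q)
    (hK : 0 ≤ K) (ha : 0 ≤ a) (hb : 0 ≤ b) (hH : 0 ≤ H) (hC : C ^ 2 ≤ G * H)
    (hGa : G ≤ Q * K * a ^ 2) (hHb : H ≤ K * b ^ 2) :
    G + 8 * C + 3 * M ^ 2 * H ≤ Q * K * (a + b) ^ 2 := by
  have hGH : G * H ≤ Q * K * a ^ 2 * (K * b ^ 2) := mul_le_mul hGa hHb hH (by positivity)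
  have hC8 : 8 * C ≤ 2 * (Q * K * a * b) := by
    refine abs_le_of_sq_le_sq' ?_ (by positivity) |>.2
    nlinarith [mul_nonneg (mul_nonneg (sub_nonneg.2 hQ) (sq_nonneg K)) (sq_nonneg (a * b)),
      mul_nonneg (by positivity : 0 ≤ Q * K ^ 2 * a ^ 2 * b ^ 2) (sub_nonneg.2 hQ)]
  nlinarith [mul_le_mul_of_nonneg_right hQM hH, mul_le_mul_of_nonneg_left hHb (by linarith : 0 ≤ Q)]

section Bonami

variable {n : ℕ} {μ : Measure ℝ} [IsProbabilityMeasure μ] {M : ℝ}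

theorem integral_mlEval_sq_succ (hM : ∀ᵐ t ∂μ, |t| ≤ M) (hmean : ∫ t, t ∂μ = 0)
    (hvar : ∫ t, t ^ 2 ∂μ = 1) (c : Finset (Fin (n + 1)) → ℝ) :
    ∫ y, mlEval c y ^ 2 ∂(Measure.pi fun _ => μ) =
      ∫ x, mlEval (coeffTail c) x ^ 2 ∂(Measure.pi fun _ => μ)
        + ∫ x, mlEval (coeffDeriv c) x ^ 2 ∂(Measure.pi fun _ => μ) := by
  rw [integral_pi_fin_succ μ (integrable_mlEval_pow hM c 2)]
  simp only [mlEval_cons, integral_add_mul_sq hM hmean hvar]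
  exact integral_add (integrable_mlEval_pow hM _ 2) (integrable_mlEval_pow hM _ 2)

theorem integral_mlEval_pow_four_succ_le (hM : ∀ᵐ t ∂μ, |t| ≤ M) (hmean : ∫ t, t ∂μ = 0)
    (hvar : ∫ t, t ^ 2 ∂μ = 1) (c : Finset (Fin (n + 1)) → ℝ) :
    ∫ y, mlEval c y ^ 4 ∂(Measure.pi fun _ => μ) ≤
      ∫ x, mlEval (coeffTail c) x ^ 4 ∂(Measure.pi fun _ => μ)
        + 8 * ∫ x, mlEval (coeffTail c) x ^ 2 * mlEval (coeffDeriv c) x ^ 2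
            ∂(Measure.pi fun _ => μ)
        + 3 * M ^ 2 * ∫ x, mlEval (coeffDeriv c) x ^ 4 ∂(Measure.pi fun _ => μ) := by
  have hg4 := integrable_mlEval_pow hM (coeffTail c) 4
  have hgh := (integrable_mlEval_pow_mul_pow hM (coeffTail c) (coeffDeriv c) 2 2).const_mul 8
  have hh4 := (integrable_mlEval_pow hM (coeffDeriv c) 4).const_mul (3 * M ^ 2)
  calc ∫ y, mlEval c y ^ 4 ∂(Measure.pi fun _ => μ)
      = ∫ x, ∫ t, (mlEval (coeffTail c) x + t * mlEval (coeffDeriv c) x) ^ 4 ∂μ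
          ∂(Measure.pi fun _ => μ) := by
        simp only [integral_pi_fin_succ μ (integrable_mlEval_pow hM c 4), mlEval_cons]
    _ ≤ ∫ x, (mlEval (coeffTail c) x ^ 4
          + 8 * (mlEval (coeffTail c) x ^ 2 * mlEval (coeffDeriv c) x ^ 2)
          + 3 * M ^ 2 * mlEval (coeffDeriv c) x ^ 4) ∂(Measure.pi fun _ => μ) :=
        integral_mono_of_nonneg (.of_forall fun x => integral_nonneg fun t => by positivity)
          ((hg4.add hgh).add hh4)
          (.of_forall fun x => integral_add_mul_pow_four_le hM hmean hvar _ _)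
    _ = _ := by
        rw [integral_add ?_ hh4, integral_add hg4 hgh, integral_const_mul, integral_const_mul]
        exact hg4.add hgh

theorem integral_mlEval_pow_four_le {Q : ℝ}
    (hM : ∀ᵐ t ∂μ, |t| ≤ M) (hmean : ∫ t, t ∂μ = 0) (hvar : ∫ t, t ^ 2 ∂μ = 1)
    (hQ : 16 ≤ Q) (hQM : 3 * M ^ 2 ≤ Q) {n d : ℕ} (c : Finset (Fin n) → ℝ)
    (hc : ∀ S, d < S.card → c S = 0) :
    ∫ x, mlEval c x ^ 4 ∂(Measure.pi fun _ => μ)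
      ≤ Q ^ d * (∫ x, mlEval c x ^ 2 ∂(Measure.pi fun _ => μ)) ^ 2 := by
  induction n generalizing d with
  | zero =>
    exact integral_pow_four_le_of_forall_eq
      (mlEval_of_degree_zero fun S hS => absurd hS (by simp [S.eq_empty_of_isEmpty]))
      (by linarith) d
  | succ n ih =>
    cases d with
    | zero =>
      exact integral_pow_four_le_of_forall_eq (mlEval_of_degree_zero hc) (by linarith) 0
    | succ d =>
      have hG := ih (coeffTail c) (coeffTail_eq_zero hc)
      have hH := ih (coeffDeriv c) (coeffDeriv_eq_zero hc)
      rw [integral_mlEval_sq_succ hM hmean hvar, pow_succ, mul_comm _ Q]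
      refine (integral_mlEval_pow_four_succ_le hM hmean hvar c).trans ?_
      refine fourth_moment_step hQ hQM (by positivity) (integral_nonneg fun _ => sq_nonneg _)
        (integral_nonneg fun _ => sq_nonneg _) (integral_nonneg fun _ => by positivity) ?_
        (by rwa [pow_succ'] at hG) hH
      simpa only [← pow_mul] using sq_integral_mul_le
        (integrable_mlEval_pow hM _ 4 |>.congr (.of_forall fun _ => by ring))
        (integrable_mlEval_pow hM _ 4 |>.congr (.of_forall fun _ => by ring))
        (integrable_mlEval_pow_mul_pow hM _ _ 2 2)

end Bonami

/-- An atom of mass at least `λ` carries at least `λ t²` of the variance. -/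
theorem ae_abs_le_sqrt_inv {μ : Measure ℝ} [IsProbabilityMeasure μ] {supp : Finset ℝ}
    (hsupp : μ ↑supp = 1) (hvar : ∫ x, x ^ 2 ∂μ = 1) {lam : ℝ} (hlam : 0 < lam)
    (hmin : ∀ v ∈ supp, μ {v} ≠ 0 → lam ≤ (μ {v}).toReal) :
    ∀ᵐ t ∂μ, |t| ≤ √lam⁻¹ := by
  have hmem : ∀ᵐ t ∂μ, t ∈ (supp : Set ℝ) :=
    (ae_mem_iff_measure_eq supp.finite_toSet.measurableSet.nullMeasurableSet).2
      (by rw [hsupp, measure_univ])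
  filter_upwards [hmem, ae_measure_singleton_ne_zero supp.countable_toSet hmem] with t ht ht0
  have hvt := measureReal_singleton_mul_sq_le
    (Integrable.of_integral_ne_zero (μ := μ) (by rw [hvar]; exact one_ne_zero)) t
  rw [hvar, measureReal_def] at hvt
  have hlt := hmin t ht ht0
  refine Real.abs_le_sqrt ?_
  rw [← one_div, le_div_iff₀ hlam]
  nlinarith [sq_nonneg t]

theorem tail_bound_numeric {lam : ℝ} (hlam : 0 < lam) (hlam2 : lam ≤ 1 / 2) {d : ℕ}
    (hd : 1 ≤ d) : (8 * lam⁻¹) ^ d / ((2 * Real.exp 1 / lam) ^ d) ^ 2 ≤ 0.52 := by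
  have he : (2.7 : ℝ) < Real.exp 1 := lt_trans (by norm_num) Real.exp_one_gt_d9
  have hratio : (8 * lam⁻¹) ^ d / ((2 * Real.exp 1 / lam) ^ d) ^ 2
      = (2 * lam / Real.exp 1 ^ 2) ^ d := by
    rw [← pow_mul, mul_comm d, pow_mul, ← div_pow]
    congr 1
    field_simp
    ring
  have hbase : 2 * lam / Real.exp 1 ^ 2 ≤ 0.52 := by
    rw [div_le_iff₀ (by positivity)]
    nlinarith
  rw [hratio]
  exact (pow_le_of_le_one (by positivity) (by linarith) (by omega)).trans hbase

theorem stmt11 {n d : ℕ} (hd : 1 ≤ d) (μ : Measure ℝ) [IsProbabilityMeasure μ]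
    (supp : Finset ℝ) (hsupp : μ ↑supp = 1)
    (hmean : ∫ x, x ∂μ = 0) (hvar : ∫ x, x ^ 2 ∂μ = 1)
    (lam : ℝ) (hlam : 0 < lam) (hlam2 : lam ≤ 1 / 2)
    (hmin : ∀ v ∈ supp, μ {v} ≠ 0 → lam ≤ (μ {v}).toReal)
    (coeff : Finset (Fin n) → ℝ)
    (hdeg : ∀ S : Finset (Fin n), d < S.card → coeff S = 0)
    (hL2 : ∫ x, (mlEval coeff x) ^ 2 ∂(Measure.pi fun _ : Fin n => μ) = 1) :
    ∫ x, (if (2 * Real.exp 1 / lam) ^ d < |mlEval coeff x| then (mlEval coeff x) ^ 2 else 0)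
        ∂(Measure.pi fun _ : Fin n => μ) ≤ 0.52 := by
  have hM := ae_abs_le_sqrt_inv hsupp hvar hlam hmin
  have hinv : 2 ≤ lam⁻¹ := by rw [le_inv_comm₀ two_pos hlam]; linarith
  have hfourth := integral_mlEval_pow_four_le hM hmean hvar (Q := 8 * lam⁻¹) (by linarith)
    (by rw [Real.sq_sqrt (by positivity)]; linarith) coeff hdeg
  rw [hL2, one_pow, mul_one] at hfourth
  calc _ ≤ (∫ x, mlEval coeff x ^ 4 ∂(Measure.pi fun _ : Fin n => μ))
          / ((2 * Real.exp 1 / lam) ^ d) ^ 2 :=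
        integral_sq_ite_lt_abs_le (integrable_mlEval_pow hM coeff 4) (by positivity)
    _ ≤ (8 * lam⁻¹) ^ d / ((2 * Real.exp 1 / lam) ^ d) ^ 2 := by gcongr
    _ ≤ 0.52 := tail_bound_numeric hlam hlam2 hd
end

section
/- For X uniform on {−1, 1} and d = 2: any degree-2 multilinear polynomial q in n variables such that q(X^{⊗n}) is distributed uniformly on {−1,1} has at most 4 nonzero coefficients, and there exists such a q with exactly 4 nonzero coefficients. Hence the maximum sparsity of a degree-2 multilinear polynomial whose output distribution under the uniform hypercube measure equals that of a single variable is exactly 4. -/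
open scoped Classical
open scoped symmDiff

/-- The ±1 point of the hypercube corresponding to a Boolean vector. -/
noncomputable def pmPoint {n : ℕ} (b : Fin n → Bool) : Fin n → ℝ :=
  fun i => if b i then 1 else -1

/-- `q(X^{⊗n})` is uniform on `{−1,1}`: all outputs lie in `{−1,1}` and exactly half of the
hypercube points evaluate to `1`. -/
def UnifOutput {n : ℕ} (q : Finset (Fin n) → ℝ) : Prop :=
  (∀ b : Fin n → Bool, mlEval q (pmPoint b) = 1 ∨ mlEval q (pmPoint b) = -1) ∧
  2 * (Finset.univ.filter fun b : Fin n → Bool => mlEval q (pmPoint b) = 1).card = 2 ^ n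

set_option linter.unnecessarySeqFocus false

lemma pmPoint_flip {n : ℕ} (b : Fin n → Bool) (i : Fin n) :
    pmPoint (Function.update b i (!(b i))) = Function.update (pmPoint b) i (-(pmPoint b i)) := by
  funext k
  by_cases h : k = i
  · subst h; simp [pmPoint, Function.update]; cases b k <;> norm_num
  · simp [pmPoint, Function.update, h]

lemma prod_flip {n : ℕ} (b : Fin n → Bool) {i : Fin n} {U : Finset (Fin n)} (hi : i ∈ U) :
    ∏ k ∈ U, pmPoint (Function.update b i (!(b i))) k = -∏ k ∈ U, pmPoint b k := by
  rw [pmPoint_flip, Finset.prod_update_of_mem hi]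
  rw [← Finset.mul_prod_erase U (pmPoint b) hi]
  have : U \ {i} = U.erase i := by rw [Finset.erase_eq]
  rw [this]; ring

lemma orthogonality {n : ℕ} (U : Finset (Fin n)) :
    ∑ b : Fin n → Bool, ∏ k ∈ U, pmPoint b k = if U = ∅ then (2:ℝ)^n else 0 := by
  by_cases hU : U = ∅
  · simp [hU, Finset.card_univ]
  · rw [if_neg hU]
    obtain ⟨i, hi⟩ := Finset.nonempty_iff_ne_empty.mpr hU
    refine Finset.sum_involution (fun b _ => Function.update b i (!(b i))) ?_ ?_
      (fun a _ => Finset.mem_univ _) ?_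
    · intro b _; rw [prod_flip b hi]; ring
    · intro b hb hne heq
      have h2 := congrFun heq i
      simp [Function.update] at h2
    · intro b _
      funext k
      by_cases h : k = i
      · subst h; simp [Function.update]
      · simp [Function.update, h]

lemma prod_sq_one {n : ℕ} (b : Fin n → Bool) (U : Finset (Fin n)) :
    (∏ k ∈ U, pmPoint b k) * (∏ k ∈ U, pmPoint b k) = 1 := by
  rw [← Finset.prod_mul_distrib]
  apply Finset.prod_eq_one
  intro k _
  simp [pmPoint]; by_cases h : b k <;> simp [h]

lemma chi_mul {n : ℕ} (b : Fin n → Bool) (S T : Finset (Fin n)) :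
    (∏ k ∈ S, pmPoint b k) * (∏ k ∈ T, pmPoint b k) = ∏ k ∈ S ∆ T, pmPoint b k := by
  rw [← Finset.prod_union_inter]
  have hUn : S ∪ T = (S ∆ T) ∪ (S ∩ T) := by
    ext k; simp [Finset.mem_symmDiff]; tauto
  have hdisj : Disjoint (S ∆ T) (S ∩ T) := by
    rw [Finset.disjoint_left]; intro k hk hk2
    simp [Finset.mem_symmDiff] at hk
    simp at hk2
    tauto
  rw [hUn, Finset.prod_union hdisj]
  rw [mul_assoc, prod_sq_one, mul_one]

lemma parseval {n : ℕ} (q : Finset (Fin n) → ℝ)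
    (hsq : ∀ b : Fin n → Bool, (mlEval q (pmPoint b)) ^ 2 = 1) :
    ∑ S : Finset (Fin n), (q S) ^ 2 = 1 := by
  have key : ∑ b : Fin n → Bool, (mlEval q (pmPoint b)) ^ 2
      = (2:ℝ)^n * ∑ S : Finset (Fin n), (q S) ^ 2 := by
    have expand : ∀ b : Fin n → Bool, (mlEval q (pmPoint b)) ^ 2
        = ∑ S : Finset (Fin n), ∑ T : Finset (Fin n),
            q S * q T * ∏ k ∈ S ∆ T, pmPoint b k := by
      intro b
      rw [sq, mlEval, Finset.sum_mul_sum]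
      refine Finset.sum_congr rfl fun S _ => Finset.sum_congr rfl fun T _ => ?_
      rw [← chi_mul b S T]; ring
    simp_rw [expand]
    rw [Finset.sum_comm]
    have swap2 : ∀ S : Finset (Fin n),
        ∑ b : Fin n → Bool, ∑ T : Finset (Fin n), q S * q T * ∏ k ∈ S ∆ T, pmPoint b k
        = ∑ T : Finset (Fin n), q S * q T * ∑ b : Fin n → Bool, ∏ k ∈ S ∆ T, pmPoint b k := by
      intro S
      rw [Finset.sum_comm]
      exact Finset.sum_congr rfl fun T _ => by rw [Finset.mul_sum]
    simp_rw [swap2, orthogonality]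
    have inner : ∀ S : Finset (Fin n),
        ∑ T : Finset (Fin n), q S * q T * (if S ∆ T = ∅ then (2:ℝ)^n else 0)
        = (2:ℝ)^n * q S ^ 2 := by
      intro S
      rw [Finset.sum_eq_single_of_mem S (Finset.mem_univ S)]
      · simp [symmDiff_self]; ring
      · intro T _ hT
        rw [if_neg, mul_zero]
        intro h
        exact hT (symmDiff_eq_bot.mp h).symm
    simp_rw [inner, ← Finset.mul_sum]
  have lhs : ∑ b : Fin n → Bool, (mlEval q (pmPoint b)) ^ 2 = (2:ℝ)^n := by
    simp_rw [hsq]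
    simp [Finset.card_univ]
  rw [lhs] at key
  have h2 : (2:ℝ)^n ≠ 0 := by positivity
  field_simp at key
  linarith

noncomputable def ptB {n : ℕ} (T : Finset (Fin n)) : Fin n → Bool := fun i => decide (i ∉ T)

lemma eval_ptB {n : ℕ} (q : Finset (Fin n) → ℝ) (T : Finset (Fin n)) :
    mlEval q (pmPoint (ptB T))
      = ∑ S : Finset (Fin n), q S * ∏ k ∈ S, (if k ∈ T then (-1:ℝ) else 1) := by
  unfold mlEval
  refine Finset.sum_congr rfl fun S _ => ?_
  congr 1
  refine Finset.prod_congr rfl fun k _ => ?_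
  by_cases h : k ∈ T <;> simp [pmPoint, ptB, h]

lemma prod_sign_singleton {n : ℕ} (S : Finset (Fin n)) (i : Fin n) :
    (∏ k ∈ S, (if k ∈ ({i} : Finset (Fin n)) then (-1:ℝ) else 1))
      = if i ∈ S then (-1:ℝ) else 1 := by
  simp_rw [Finset.mem_singleton]
  exact Finset.prod_ite_eq' S i (fun _ => (-1:ℝ))

lemma prod_sign_pair {n : ℕ} (S : Finset (Fin n)) {i j : Fin n} (hij : i ≠ j) :
    (∏ k ∈ S, (if k ∈ ({i, j} : Finset (Fin n)) then (-1:ℝ) else 1))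
      = (if i ∈ S then (-1:ℝ) else 1) * (if j ∈ S then (-1:ℝ) else 1) := by
  have : ∀ k, (if k ∈ ({i, j} : Finset (Fin n)) then (-1:ℝ) else 1)
      = (if k = i then (-1:ℝ) else 1) * (if k = j then (-1:ℝ) else 1) := by
    intro k
    by_cases hki : k = i
    · subst hki; simp [hij]
    · by_cases hkj : k = j
      · subst hkj; simp [hki]
      · simp [hki, hkj]
  simp_rw [this]
  rw [Finset.prod_mul_distrib, Finset.prod_ite_eq' S i (fun _ => (-1:ℝ)),
    Finset.prod_ite_eq' S j (fun _ => (-1:ℝ))]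

lemma isInt_sum {α : Type*} (s : Finset α) (f : α → ℝ)
    (h : ∀ a ∈ s, ∃ m : ℤ, f a = (m:ℝ)) : ∃ m : ℤ, ∑ a ∈ s, f a = (m:ℝ) := by
  classical
  induction s using Finset.induction_on with
  | empty => exact ⟨0, by simp⟩
  | @insert a s ha ih =>
    obtain ⟨m, hm⟩ := h a (Finset.mem_insert_self a s)
    obtain ⟨m', hm'⟩ := ih (fun b hb => h b (Finset.mem_insert_of_mem hb))
    exact ⟨m + m', by rw [Finset.sum_insert ha, hm, hm']; push_cast; ring⟩

lemma half_int {n : ℕ} (q : Finset (Fin n) → ℝ)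
    (hdeg : ∀ S : Finset (Fin n), 2 < S.card → q S = 0)
    (hpm : ∀ b : Fin n → Bool, mlEval q (pmPoint b) = 1 ∨ mlEval q (pmPoint b) = -1) :
    ∀ S : Finset (Fin n), ∃ m : ℤ, 2 * q S = (m : ℝ) := by
  -- integer values of evaluations
  have hInt : ∀ T : Finset (Fin n), ∃ e : ℤ,
      mlEval q (pmPoint (ptB T)) = (e : ℝ) ∧ (e = 1 ∨ e = -1) := by
    intro T
    rcases hpm (ptB T) with h | h
    · exact ⟨1, by simpa using h, Or.inl rfl⟩
    · exact ⟨-1, by simpa using h, Or.inr rfl⟩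
  -- pairs
  have hpair : ∀ S : Finset (Fin n), S.card = 2 → ∃ m : ℤ, 2 * q S = (m : ℝ) := by
    intro S hS
    obtain ⟨i, j, hij, rfl⟩ := Finset.card_eq_two.mp hS
    obtain ⟨e0, he0, ho0⟩ := hInt (∅ : Finset (Fin n))
    obtain ⟨e1, he1, ho1⟩ := hInt ({i} : Finset (Fin n))
    obtain ⟨e2, he2, ho2⟩ := hInt ({j} : Finset (Fin n))
    obtain ⟨e3, he3, ho3⟩ := hInt ({i, j} : Finset (Fin n))
    have hcomb : mlEval q (pmPoint (ptB (∅ : Finset (Fin n))))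
        - mlEval q (pmPoint (ptB ({i} : Finset (Fin n))))
        - mlEval q (pmPoint (ptB ({j} : Finset (Fin n))))
        + mlEval q (pmPoint (ptB ({i, j} : Finset (Fin n))))
        = 4 * q {i, j} := by
      simp_rw [eval_ptB]
      rw [← Finset.sum_sub_distrib, ← Finset.sum_sub_distrib, ← Finset.sum_add_distrib]
      have step : ∀ S : Finset (Fin n),
          q S * ∏ k ∈ S, (if k ∈ (∅ : Finset (Fin n)) then (-1:ℝ) else 1)
          - q S * ∏ k ∈ S, (if k ∈ ({i} : Finset (Fin n)) then (-1:ℝ) else 1)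
          - q S * ∏ k ∈ S, (if k ∈ ({j} : Finset (Fin n)) then (-1:ℝ) else 1)
          + q S * ∏ k ∈ S, (if k ∈ ({i, j} : Finset (Fin n)) then (-1:ℝ) else 1)
          = if i ∈ S ∧ j ∈ S then 4 * q S else 0 := by
        intro S
        rw [prod_sign_singleton S i, prod_sign_singleton S j, prod_sign_pair S hij]
        simp only [Finset.notMem_empty, if_false, Finset.prod_const_one]
        by_cases hi : i ∈ S <;> by_cases hj : j ∈ S <;> simp [hi, hj] <;> ring
      simp_rw [step]
      rw [Finset.sum_eq_single_of_mem ({i, j} : Finset (Fin n)) (Finset.mem_univ _)]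
      · simp
      · intro S _ hne
        by_cases h : i ∈ S ∧ j ∈ S
        · rw [if_pos h]
          have hsub : ({i, j} : Finset (Fin n)) ⊆ S := by
            intro k hk
            rcases Finset.mem_insert.mp hk with rfl | hk
            · exact h.1
            · rw [Finset.mem_singleton] at hk; subst hk; exact h.2
          have hcard : 2 < S.card := by
            have := Finset.card_lt_card (Finset.ssubset_iff_subset_ne.mpr ⟨hsub, (Ne.symm hne)⟩)
            rwa [Finset.card_pair hij] at this
          rw [hdeg S hcard]; ring
        · rw [if_neg h]
    rw [he0, he1, he2, he3] at hcomb
    obtain ⟨m, hm⟩ : ∃ m : ℤ, e0 - e1 - e2 + e3 = 2 * m :=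
      ⟨(e0 - e1 - e2 + e3) / 2, by omega⟩
    refine ⟨m, ?_⟩
    have : ((e0 : ℝ) - e1 - e2 + e3) = ((2 * m : ℤ) : ℝ) := by exact_mod_cast hm
    push_cast at this ⊢
    linarith
  -- sets containing a given element sum to an integer
  have hfilter : ∀ i : Fin n, ∃ m : ℤ,
      ∑ S ∈ Finset.univ.filter (fun S : Finset (Fin n) => i ∈ S), 2 * q S = (m : ℝ) := by
    intro i
    obtain ⟨e0, he0, _⟩ := hInt (∅ : Finset (Fin n))
    obtain ⟨e1, he1, _⟩ := hInt ({i} : Finset (Fin n))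
    refine ⟨e0 - e1, ?_⟩
    have hcomb : mlEval q (pmPoint (ptB (∅ : Finset (Fin n))))
        - mlEval q (pmPoint (ptB ({i} : Finset (Fin n))))
        = ∑ S ∈ Finset.univ.filter (fun S : Finset (Fin n) => i ∈ S), 2 * q S := by
      simp_rw [eval_ptB]
      rw [← Finset.sum_sub_distrib]
      rw [Finset.sum_filter]
      refine Finset.sum_congr rfl fun S _ => ?_
      rw [prod_sign_singleton S i]
      simp only [Finset.notMem_empty, if_false, Finset.prod_const_one]
      by_cases hi : i ∈ S <;> simp [hi] <;> ring
    rw [he0, he1] at hcomb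
    rw [← hcomb]; push_cast; ring
  -- singletons
  have hsingle : ∀ i : Fin n, ∃ m : ℤ, 2 * q {i} = (m : ℝ) := by
    intro i
    obtain ⟨m, hm⟩ := hfilter i
    have hmem : ({i} : Finset (Fin n)) ∈ Finset.univ.filter (fun S : Finset (Fin n) => i ∈ S) := by
      simp
    have hterms : ∀ S ∈ (Finset.univ.filter (fun S : Finset (Fin n) => i ∈ S)).erase {i},
        ∃ mz : ℤ, 2 * q S = (mz : ℝ) := by
      intro S hS
      obtain ⟨hne, hSf⟩ := Finset.mem_erase.mp hS
      have hiS : i ∈ S := (Finset.mem_filter.mp hSf).2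
      have hcard : 1 < S.card := by
        have hsub : ({i} : Finset (Fin n)) ⊆ S := Finset.singleton_subset_iff.mpr hiS
        have := Finset.card_lt_card (Finset.ssubset_iff_subset_ne.mpr ⟨hsub, Ne.symm hne⟩)
        simpa using this
      rcases Nat.lt_or_ge S.card 3 with h3 | h3
      · exact hpair S (by omega)
      · exact ⟨0, by rw [hdeg S (by omega)]; norm_num⟩
    obtain ⟨m', hm'⟩ := isInt_sum
      ((Finset.univ.filter (fun S : Finset (Fin n) => i ∈ S)).erase {i})
      (fun S => 2 * q S) hterms
    refine ⟨m - m', ?_⟩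
    have := Finset.sum_erase_add
      (Finset.univ.filter (fun S : Finset (Fin n) => i ∈ S)) (fun S => 2 * q S) hmem
    rw [hm', hm] at this
    have this' : (m' : ℝ) + 2 * q {i} = (m : ℝ) := by simpa using this
    push_cast
    linarith
  -- all nonempty
  have hne : ∀ S : Finset (Fin n), S ≠ ∅ → ∃ m : ℤ, 2 * q S = (m : ℝ) := by
    intro S hS
    rcases Nat.lt_or_ge S.card 3 with h3 | h3
    · have h0 : S.card ≠ 0 := fun h => hS (Finset.card_eq_zero.mp h)
      have h12 : S.card = 1 ∨ S.card = 2 := by omega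
      rcases h12 with h | h
      · obtain ⟨i, rfl⟩ := Finset.card_eq_one.mp h
        exact hsingle i
      · exact hpair S h
    · exact ⟨0, by rw [hdeg S (by omega)]; norm_num⟩
  -- empty set
  intro S
  by_cases hS : S = ∅
  · subst hS
    obtain ⟨e0, he0, _⟩ := hInt (∅ : Finset (Fin n))
    have hsum : mlEval q (pmPoint (ptB (∅ : Finset (Fin n)))) = ∑ S : Finset (Fin n), q S := by
      rw [eval_ptB]
      refine Finset.sum_congr rfl fun S _ => ?_
      simp
    obtain ⟨m', hm'⟩ := isInt_sum (Finset.univ.erase (∅ : Finset (Fin n)))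
      (fun S => 2 * q S) (fun S hS => hne S (Finset.mem_erase.mp hS).1)
    refine ⟨2 * e0 - m', ?_⟩
    have := Finset.sum_erase_add Finset.univ (fun S : Finset (Fin n) => 2 * q S)
      (Finset.mem_univ (∅ : Finset (Fin n)))
    rw [hm'] at this
    have htot : ∑ S : Finset (Fin n), 2 * q S = 2 * (e0 : ℝ) := by
      rw [← Finset.mul_sum, ← hsum, he0]
    rw [htot] at this
    have this' : (m' : ℝ) + 2 * q ∅ = 2 * (e0 : ℝ) := by simpa using this
    push_cast
    try linarith
  · exact hne S hS

noncomputable def qex : Finset (Fin 3) → ℝ := fun S =>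
  if S = {1} then 1/2 else if S = {2} then 1/2
  else if S = {0, 1} then 1/2 else if S = {0, 2} then -(1/2) else 0

def Fex : Finset (Finset (Fin 3)) := {{1}, {2}, {0, 1}, {0, 2}}

lemma qex_eval (x : Fin 3 → ℝ) :
    mlEval qex x = (x 1 + x 2 + x 0 * x 1 - x 0 * x 2) / 2 := by
  have h1 : qex {1} = 1/2 := by unfold qex; rw [if_pos rfl]
  have h2 : qex {2} = 1/2 := by
    unfold qex; rw [if_neg (by decide), if_pos rfl]
  have h3 : qex {0,1} = 1/2 := by
    unfold qex; rw [if_neg (by decide), if_neg (by decide), if_pos rfl]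
  have h4 : qex {0,2} = -(1/2) := by
    unfold qex; rw [if_neg (by decide), if_neg (by decide), if_neg (by decide), if_pos rfl]
  unfold mlEval
  rw [← Finset.sum_subset (Finset.subset_univ Fex)]
  · rw [show Fex = {{1}, {2}, {0, 1}, {0, 2}} from rfl]
    rw [Finset.sum_insert (by decide), Finset.sum_insert (by decide),
      Finset.sum_insert (by decide), Finset.sum_singleton]
    rw [h1, h2, h3, h4]
    rw [Finset.prod_singleton, Finset.prod_singleton,
      Finset.prod_pair (by decide), Finset.prod_pair (by decide)]
    ring
  · intro S _ hS
    have h : qex S = 0 := by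
      simp only [Fex, Finset.mem_insert, Finset.mem_singleton, not_or] at hS
      obtain ⟨g1, g2, g3, g4⟩ := hS
      unfold qex; rw [if_neg g1, if_neg g2, if_neg g3, if_neg g4]
    rw [h, zero_mul]

lemma qex_val (b : Fin 3 → Bool) :
    mlEval qex (pmPoint b) = if (b 0 && b 1 || !(b 0) && b 2) then 1 else -1 := by
  rw [qex_eval]
  rcases hb0 : b 0 <;> rcases hb1 : b 1 <;> rcases hb2 : b 2 <;>
    simp [pmPoint, hb0, hb1, hb2] <;> norm_num

lemma qex_unif : UnifOutput qex := by
  constructor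
  · intro b
    rw [qex_val]
    by_cases h : (b 0 && b 1 || !(b 0) && b 2) <;> simp [h]
  · have hcongr : (Finset.univ.filter fun b : Fin 3 → Bool => mlEval qex (pmPoint b) = 1)
        = (Finset.univ.filter fun b : Fin 3 → Bool => (b 0 && b 1 || !(b 0) && b 2) = true) := by
      apply Finset.filter_congr
      intro b _
      rw [qex_val]
      by_cases h : (b 0 && b 1 || !(b 0) && b 2) <;> simp [h] <;> norm_num
    rw [hcongr]
    decide

lemma qex_ncard : {S : Finset (Fin 3) | qex S ≠ 0}.ncard = 4 := by
  have hset : {S : Finset (Fin 3) | qex S ≠ 0} = ↑Fex := by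
    ext S
    simp only [Set.mem_setOf_eq, Finset.coe_insert, Finset.mem_coe]
    constructor
    · intro h
      by_contra hmem
      simp only [Fex, Finset.mem_insert, Finset.mem_singleton, not_or] at hmem
      obtain ⟨h1, h2, h3, h4⟩ := hmem
      exact h (by unfold qex; rw [if_neg h1, if_neg h2, if_neg h3, if_neg h4])
    · intro hmem
      simp only [Fex, Finset.mem_insert, Finset.mem_singleton] at hmem
      rcases hmem with rfl | rfl | rfl | rfl
      · rw [show qex {1} = 1/2 from by unfold qex; rw [if_pos rfl]]; norm_num
      · rw [show qex {2} = 1/2 from by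
          unfold qex; rw [if_neg (by decide), if_pos rfl]]; norm_num
      · rw [show qex {0,1} = 1/2 from by
          unfold qex; rw [if_neg (by decide), if_neg (by decide), if_pos rfl]]; norm_num
      · rw [show qex {0,2} = -(1/2) from by
          unfold qex;
          rw [if_neg (by decide), if_neg (by decide), if_neg (by decide), if_pos rfl]]; norm_num
  rw [hset, Set.ncard_coe_finset]
  decide

lemma qex_deg : ∀ S : Finset (Fin 3), 2 < S.card → qex S = 0 := by
  intro S h
  have h1 : S ≠ {1} := by rintro rfl; revert h; decide
  have h2 : S ≠ {2} := by rintro rfl; revert h; decide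
  have h3 : S ≠ {0,1} := by rintro rfl; revert h; decide
  have h4 : S ≠ {0,2} := by rintro rfl; revert h; decide
  unfold qex; rw [if_neg h1, if_neg h2, if_neg h3, if_neg h4]


theorem stmt17 :
    (∀ (n : ℕ) (q : Finset (Fin n) → ℝ),
      (∀ S : Finset (Fin n), 2 < S.card → q S = 0) →
      UnifOutput q →
      {S : Finset (Fin n) | q S ≠ 0}.ncard ≤ 4) ∧
    (∃ (n : ℕ) (q : Finset (Fin n) → ℝ),
      (∀ S : Finset (Fin n), 2 < S.card → q S = 0) ∧
      UnifOutput q ∧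
      {S : Finset (Fin n) | q S ≠ 0}.ncard = 4) := by
  constructor
  · intro n q hdeg hU
    have hpm := hU.1
    have hpar : ∑ S : Finset (Fin n), (q S) ^ 2 = 1 :=
      parseval q (fun b => by rcases hpm b with h | h <;> rw [h] <;> norm_num)
    have hhalf := half_int q hdeg hpm
    set N := Finset.univ.filter (fun S : Finset (Fin n) => q S ≠ 0) with hN
    have hset : {S : Finset (Fin n) | q S ≠ 0} = ↑N := by
      ext S; simp [hN]
    rw [hset, Set.ncard_coe_finset]
    have hlb : ∀ S ∈ N, (1/4 : ℝ) ≤ (q S) ^ 2 := by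
      intro S hS
      have hq : q S ≠ 0 := by
        have := Finset.mem_filter.mp hS; exact this.2
      obtain ⟨m, hm⟩ := hhalf S
      have hm0 : m ≠ 0 := by
        rintro rfl
        simp only [Int.cast_zero] at hm
        exact hq (by linarith)
      have h1 : (1:ℤ) ≤ m ^ 2 := by rcases lt_or_gt_of_ne hm0 with h | h <;> nlinarith
      have h1' : (1:ℝ) ≤ (m:ℝ) ^ 2 := by exact_mod_cast h1
      have h2 : 4 * q S ^ 2 = (m:ℝ) ^ 2 := by rw [← hm]; ring
      linarith
    have hcard : (N.card : ℝ) * (1/4) ≤ 1 := by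
      calc (N.card : ℝ) * (1/4) = N.card • (1/4 : ℝ) := by rw [nsmul_eq_mul]
        _ ≤ ∑ S ∈ N, (q S) ^ 2 := Finset.card_nsmul_le_sum N _ _ hlb
        _ ≤ ∑ S : Finset (Fin n), (q S) ^ 2 :=
            Finset.sum_le_sum_of_subset_of_nonneg (Finset.subset_univ N)
              (fun S _ _ => sq_nonneg _)
        _ = 1 := hpar
    have hfin : (N.card : ℝ) ≤ 4 := by linarith
    exact_mod_cast hfin
  · exact ⟨3, qex, qex_deg, qex_unif, qex_ncard⟩
end

section
/- For every s ≥ 1 and d ≥ 1 there exists a degree-d multilinear polynomial q over {−1,1}-valued inputs with exactly 4^{d−1}·s nonzero coefficients such that q(U^{⊗n}) (U uniform on {−1,1}) has the same distribution as p(U^{⊗s}) for the s-sparse polynomial p(x) = x₁ + … + x_s. -/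
open scoped Classical

/-!
A depth-`(k+1)` decision tree queries its root `r` and continues in the left or right subtree, so
its multilinear expansion is `T_{k+1} = (1 + x_r)/2 · T_k(x_L) + (1 - x_r)/2 · T_k(x_R)`. Since
`T_k` has no constant term, the four products have pairwise distinct monomials, so each level
multiplies the number of monomials by `4` and raises the degree by `1`. The tree is `±1`-valued with mean equal to its constant
coefficient `0`, hence balanced, so `s` copies on disjoint variables take jointly uniform values
in `{±1}^s`: their sum is distributed as `x₁ + ⋯ + x_s`.
-/

open Finset

noncomputable section

variable {α β ι X Y : Type*}

def pm (b : Bool) : ℝ := if b then 1 else -1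

def evalML [Fintype α] (c : Finset α → ℝ) (x : α → ℝ) : ℝ :=
  ∑ S, c S * ∏ i ∈ S, x i

def IsBalanced [Fintype X] (f : X → Bool) : Prop :=
  2 * #{x | f x = true} = Fintype.card X

section Cube

variable [Fintype α] [DecidableEq α]

lemma sum_prod_pm_eq_zero {S : Finset α} (hS : S.Nonempty) :
    ∑ b : α → Bool, ∏ i ∈ S, pm (b i) = 0 := by
  obtain ⟨i₀, hi₀⟩ := hS
  simp_rw [← Fintype.prod_ite_mem S,
    ← Fintype.prod_sum fun i (β : Bool) => if i ∈ S then pm β else 1]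
  exact prod_eq_zero (mem_univ i₀) (by simp [hi₀, pm])

lemma sum_evalML_pm (c : Finset α → ℝ) :
    ∑ b : α → Bool, evalML c (fun i => pm (b i)) = 2 ^ Fintype.card α * c ∅ := by
  simp only [evalML]
  rw [sum_comm, sum_eq_single ∅]
  · simp [mul_comm]
  · intro S _ hS
    rw [← mul_sum, sum_prod_pm_eq_zero (nonempty_iff_ne_empty.2 hS), mul_zero]
  · simp

end Cube

lemma isBalanced_of_sum_pm_eq_zero [Fintype X] {f : X → Bool} (h : ∑ x, pm (f x) = 0) :
    IsBalanced f := by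
  have hsplit := card_filter_add_card_filter_not (s := univ) fun x => f x = true
  simp only [pm, sum_ite, sum_const, nsmul_eq_mul, mul_one, mul_neg, ← sub_eq_add_neg,
    sub_eq_zero, Nat.cast_inj] at h
  rw [card_univ] at hsplit
  unfold IsBalanced
  omega

lemma card_filter_comp_eq_mul [Fintype X] [Fintype Y] [DecidableEq Y] (f : X → Y) {N : ℕ}
    (hf : ∀ y, #{x | f x = y} = N) (P : Y → Prop) [DecidablePred P] :
    #{x | P (f x)} = N * #{y | P y} := by
  rw [card_eq_sum_card_fiberwise (f := f) (t := {y | P y}) (by intro x; simp),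
    sum_congr rfl fun y hy => ?_, sum_const, smul_eq_mul, mul_comm]
  rw [← hf y, filter_filter]
  congr 1; ext x
  simp only [mem_filter, mem_univ, true_and] at hy ⊢
  exact ⟨And.right, fun hx => ⟨hx ▸ hy, hx⟩⟩

section PushSum

variable [Fintype α] [Fintype ι] (ε : ι → ℝ) (F : ι → Finset α → Finset β)
  (c : Finset α → ℝ)

def pushSum (S : Finset β) : ℝ :=
  ∑ p : ι × Finset α, if F p.1 p.2 = S then ε p.1 * c p.2 else 0

lemma evalML_pushSum [Fintype β] (x : β → ℝ) :
    evalML (pushSum ε F c) x = ∑ i, ε i * ∑ T, c T * ∏ j ∈ F i T, x j := by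
  simp only [evalML, pushSum, sum_mul, ite_mul, zero_mul]
  rw [sum_comm, Fintype.sum_prod_type]
  simp [mul_sum, mul_assoc]

variable {ε F c}

lemma pushSum_eq_zero {S : Finset β} (hS : ∀ i T, c T ≠ 0 → F i T ≠ S) :
    pushSum ε F c S = 0 :=
  sum_eq_zero fun p _ => by
    by_cases hp : c p.2 = 0
    · simp [hp]
    · exact if_neg (hS p.1 p.2 hp)

lemma pushSum_eq_zero_of_card_lt {d m : ℕ} (hc : ∀ T, d < #T → c T = 0)
    (hF : ∀ i T, #(F i T) ≤ #T + m) {S : Finset β} (hS : d + m < #S) : pushSum ε F c S = 0 :=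
  pushSum_eq_zero fun i T hT hFS => hT (hc T (by subst hFS; have := hF i T; omega))

variable (hinj : Set.InjOn (fun p : ι × Finset α => F p.1 p.2) {p | c p.2 ≠ 0})
include hinj

lemma pushSum_apply {i : ι} {T : Finset α} (hT : c T ≠ 0) :
    pushSum ε F c (F i T) = ε i * c T := by
  rw [pushSum, sum_eq_single (i, T)]
  · simp
  · intro p _ hp
    by_cases hpc : c p.2 = 0
    · simp [hpc]
    · exact if_neg fun h => hp (hinj hpc hT h)
  · simp

lemma support_pushSum (hε : ∀ i, ε i ≠ 0) :
    {S | pushSum ε F c S ≠ 0} = (fun p : ι × Finset α => F p.1 p.2) '' {p | c p.2 ≠ 0} := by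
  ext S
  constructor
  · intro hS
    by_contra h
    exact hS (pushSum_eq_zero fun i T hT hFS => h ⟨(i, T), hT, hFS⟩)
  · rintro ⟨⟨i, T⟩, hT, rfl⟩
    exact (pushSum_apply hinj hT).trans_ne (mul_ne_zero (hε i) hT)

lemma ncard_support_pushSum (hε : ∀ i, ε i ≠ 0) :
    {S | pushSum ε F c S ≠ 0}.ncard = Fintype.card ι * {T | c T ≠ 0}.ncard := by
  have hprod : {p : ι × Finset α | c p.2 ≠ 0} = Set.univ ×ˢ {T | c T ≠ 0} := by ext; simp
  rw [support_pushSum hinj hε, hinj.ncard_image, hprod, Set.ncard_prod, Set.ncard_univ,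
    Nat.card_eq_fintype_card]

end PushSum

lemma setOf_ne_zero_subset_nonempty {c : Finset α → ℝ} (h0 : c ∅ = 0) :
    {p : ι × Finset α | c p.2 ≠ 0} ⊆ {p | p.2.Nonempty} :=
  fun _ hp => nonempty_iff_ne_empty.2 fun h => hp (h ▸ h0)

section DecisionStep

/- The variables of `Unit ⊕ α ⊕ α` are the root, the left and the right subtree. `p.1` says
whether the root occurs in the monomial and `p.2` in which subtree the rest of it lives;
`stepWeight` reads off the coefficients of `(1 + x_r)/2 · T(x_L) + (1 - x_r)/2 · T(x_R)`. -/
def stepMonomial (p : Bool × Bool) (T : Finset α) : Finset (Unit ⊕ α ⊕ α) :=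
  (if p.1 then univ else ∅).disjSum (if p.2 then (∅ : Finset α).disjSum T else T.disjSum ∅)

def stepWeight (p : Bool × Bool) : ℝ := if p.1 && p.2 then -1 / 2 else 1 / 2

lemma stepMonomial_injOn :
    Set.InjOn (fun p : (Bool × Bool) × Finset α => stepMonomial p.1 p.2) {p | p.2.Nonempty} := by
  rintro ⟨⟨r, a⟩, T⟩ hT ⟨⟨r', a'⟩, T'⟩ hT' h
  rw [Set.mem_ofPred_eq, nonempty_iff_ne_empty] at hT hT'
  cases r <;> cases r' <;> cases a <;> cases a' <;>
    simp only [stepMonomial, ↓reduceIte, Bool.false_eq_true, disjSum_inj] at h <;>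
    simp_all [@eq_comm _ ∅]

lemma card_stepMonomial_le (p : Bool × Bool) (T : Finset α) : #(stepMonomial p T) ≤ #T + 1 := by
  rcases p with ⟨_ | _, _ | _⟩ <;> simp [stepMonomial, card_disjSum, add_comm]

variable [Fintype α] {c : Finset α → ℝ}

variable (c) in
def decisionStep : Finset (Unit ⊕ α ⊕ α) → ℝ :=
  pushSum stepWeight stepMonomial c

lemma decisionStep_empty (h0 : c ∅ = 0) : decisionStep c ∅ = 0 :=
  pushSum_eq_zero fun p T hT h => by
    rcases p with ⟨_ | _, _ | _⟩ <;> simp_all [stepMonomial, disjSum_eq_empty]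

lemma decisionStep_eq_zero_of_card_lt {d : ℕ} (hc : ∀ T, d < #T → c T = 0)
    {S : Finset (Unit ⊕ α ⊕ α)} (hS : d + 1 < #S) : decisionStep c S = 0 :=
  pushSum_eq_zero_of_card_lt hc card_stepMonomial_le hS

lemma ncard_support_decisionStep (h0 : c ∅ = 0) :
    {S | decisionStep c S ≠ 0}.ncard = 4 * {T | c T ≠ 0}.ncard :=
  ncard_support_pushSum (stepMonomial_injOn.mono (setOf_ne_zero_subset_nonempty h0))
    (by rintro ⟨_ | _, _ | _⟩ <;> norm_num [stepWeight])

lemma evalML_decisionStep (x : Unit ⊕ α ⊕ α → ℝ) :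
    evalML (decisionStep c) x =
      (1 + x (.inl ())) / 2 * evalML c (fun a => x (.inr (.inl a))) +
        (1 - x (.inl ())) / 2 * evalML c (fun a => x (.inr (.inr a))) := by
  simp only [decisionStep, evalML_pushSum, Fintype.sum_prod_type, Fintype.sum_bool, stepWeight,
    stepMonomial, prod_disjSum]
  simp only [evalML, mul_sum, ← sum_add_distrib]
  refine sum_congr rfl fun T _ => ?_
  simp only [↓reduceIte, Bool.and_self, Bool.and_true, Bool.and_false, Bool.false_eq_true,
    univ_unique, prod_singleton, prod_empty, empty_disjSum, disjSum_empty, prod_map,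
    Function.Embedding.inl_apply, Function.Embedding.inr_apply, one_mul]
  ring

end DecisionStep

section Tree

/- `TreeVar k` indexes the nodes of the complete binary tree of depth `k + 1`. -/
def TreeVar : ℕ → Type
  | 0 => Unit
  | k + 1 => Unit ⊕ TreeVar k ⊕ TreeVar k

instance TreeVar.instFintype : ∀ k, Fintype (TreeVar k)
  | 0 => inferInstanceAs (Fintype Unit)
  | k + 1 =>
    letI := TreeVar.instFintype k
    inferInstanceAs (Fintype (Unit ⊕ TreeVar k ⊕ TreeVar k))

instance TreeVar.instDecidableEq : ∀ k, DecidableEq (TreeVar k)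
  | 0 => inferInstanceAs (DecidableEq Unit)
  | k + 1 =>
    letI := TreeVar.instDecidableEq k
    inferInstanceAs (DecidableEq (Unit ⊕ TreeVar k ⊕ TreeVar k))

def treeEval : (k : ℕ) → (TreeVar k → Bool) → Bool
  | 0, b => b ()
  | k + 1, b =>
    if b (Sum.inl ()) then treeEval k (fun t => b (Sum.inr (Sum.inl t)))
    else treeEval k (fun t => b (Sum.inr (Sum.inr t)))

def treeCoeff : (k : ℕ) → Finset (TreeVar k) → ℝ
  | 0 => fun S => if S = univ then 1 else 0
  | k + 1 => decisionStep (treeCoeff k)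

lemma treeCoeff_empty : ∀ k, treeCoeff k ∅ = 0
  | 0 => show (if (∅ : Finset Unit) = univ then (1 : ℝ) else 0) = 0 by simp
  | k + 1 => decisionStep_empty (treeCoeff_empty k)

lemma treeCoeff_eq_zero_of_card_lt :
    ∀ (k : ℕ) (S : Finset (TreeVar k)), k + 1 < #S → treeCoeff k S = 0
  | 0, S, hS => absurd hS (card_le_univ S).not_gt
  | k + 1, _, hS => decisionStep_eq_zero_of_card_lt (treeCoeff_eq_zero_of_card_lt k) hS

lemma ncard_support_treeCoeff : ∀ k, {S | treeCoeff k S ≠ 0}.ncard = 4 ^ k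
  | 0 => show {S : Finset Unit | (if S = univ then (1 : ℝ) else 0) ≠ 0}.ncard = 1 by simp
  | k + 1 => (ncard_support_decisionStep (treeCoeff_empty k)).trans <| by
    rw [ncard_support_treeCoeff k, pow_succ, mul_comm]

lemma evalML_treeCoeff : ∀ k (b : TreeVar k → Bool),
    evalML (treeCoeff k) (fun i => pm (b i)) = pm (treeEval k b)
  | 0, b =>
    show ∑ S : Finset Unit, (if S = univ then 1 else 0) * ∏ i ∈ S, pm (b i) = _ by simp; rfl
  | k + 1, b => (evalML_decisionStep _).trans <| by
    rw [evalML_treeCoeff k, evalML_treeCoeff k, treeEval]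
    cases b (Sum.inl ()) <;> norm_num [pm]

lemma isBalanced_treeEval (k : ℕ) : IsBalanced (treeEval k) :=
  isBalanced_of_sum_pm_eq_zero <| by
    simp only [← evalML_treeCoeff]
    rw [sum_evalML_pm, treeCoeff_empty, mul_zero]

end Tree

section Blocks

variable (e : ι × α ≃ β)

def blockEmb (i : ι) : α ↪ β := (Function.Embedding.sectR i α).trans e.toEmbedding

lemma blockEmb_injOn :
    Set.InjOn (fun p : ι × Finset α => p.2.map (blockEmb e p.1)) {p | p.2.Nonempty} := by
  rintro ⟨i, T⟩ ⟨a, ha⟩ ⟨j, T'⟩ - h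
  dsimp only at h
  obtain ⟨a', -, h'⟩ := mem_map.1 (h ▸ mem_map_of_mem (blockEmb e i) ha)
  obtain rfl : j = i := congrArg Prod.fst (e.injective h')
  rw [map_injective _ h]

variable [Fintype ι] [Fintype α] {c : Finset α → ℝ}

variable (c) in
def blockSum : Finset β → ℝ :=
  pushSum (fun _ => 1) (fun i T => T.map (blockEmb e i)) c

lemma blockSum_eq_zero_of_card_lt {d : ℕ} (hc : ∀ T, d < #T → c T = 0) {S : Finset β}
    (hS : d < #S) : blockSum e c S = 0 :=
  pushSum_eq_zero_of_card_lt (m := 0) hc (fun _ _ => (card_map _).le) hS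

lemma ncard_support_blockSum (h0 : c ∅ = 0) :
    {S | blockSum e c S ≠ 0}.ncard = Fintype.card ι * {T | c T ≠ 0}.ncard :=
  ncard_support_pushSum ((blockEmb_injOn e).mono (setOf_ne_zero_subset_nonempty h0))
    fun _ => one_ne_zero

lemma evalML_blockSum [Fintype β] (x : β → ℝ) :
    evalML (blockSum e c) x = ∑ i, evalML c fun a => x (e (i, a)) := by
  rw [blockSum, evalML_pushSum]
  simp [evalML, prod_map, blockEmb]

lemma card_filter_blockwise_of_isBalanced [DecidableEq ι] [DecidableEq α] [Fintype β]
    [DecidableEq β] {g : (α → Bool) → Bool} (hg : IsBalanced g) (P : (ι → Bool) → Prop)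
    [DecidablePred P] :
    2 ^ Fintype.card ι * #{b : β → Bool | P fun i => g fun a => b (e (i, a))} =
      2 ^ Fintype.card β * #{c : ι → Bool | P c} := by
  set N := #{a | g a = true}
  have hfalse : #{a | g a = false} = N := by
    have := card_filter_add_card_filter_not (s := univ) fun a => g a = true
    simp only [card_univ, Bool.not_eq_true] at this
    unfold IsBalanced at hg
    omega
  have hfiber (c : ι → Bool) :
      #{b : β → Bool | (fun i => g fun a => b (e (i, a))) = c} = N ^ Fintype.card ι := by
    calc _ = #(Fintype.piFinset fun i => {a | g a = c i}) :=
          card_equiv ((e.symm.arrowCongr (Equiv.refl Bool)).trans (Equiv.curry ι α Bool))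
            fun b => by
              simp only [mem_filter, mem_univ, true_and, Fintype.mem_piFinset, funext_iff]
              rfl
      _ = N ^ Fintype.card ι := by
          rw [Fintype.card_piFinset, ← card_univ, ← prod_const]
          refine prod_congr rfl fun i _ => ?_
          cases c i
          exacts [hfalse, rfl]
  rw [card_filter_comp_eq_mul _ hfiber, ← mul_assoc, ← mul_pow, hg, Fintype.card_fun,
    Fintype.card_bool, ← pow_mul, ← Fintype.card_congr e, Fintype.card_prod]
  ring

end Blocks

end

theorem stmt18_general (s d : ℕ) (hd : 1 ≤ d) :
    ∃ (n : ℕ) (q : Finset (Fin n) → ℝ),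
      (∀ S : Finset (Fin n), d < S.card → q S = 0) ∧
      {S : Finset (Fin n) | q S ≠ 0}.ncard = 4 ^ (d - 1) * s ∧
      ∀ v : ℝ,
        2 ^ s * (Finset.univ.filter fun b : Fin n → Bool =>
            mlEval q (pmPoint b) = v).card =
        2 ^ n * (Finset.univ.filter fun b : Fin s → Bool =>
            (∑ i : Fin s, (if b i then (1 : ℝ) else -1)) = v).card := by
  obtain ⟨k, rfl⟩ : ∃ k, d = k + 1 := ⟨d - 1, by omega⟩
  let e := Fintype.equivFin (Fin s × TreeVar k)
  refine ⟨_, blockSum e (treeCoeff k),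
    fun _ => blockSum_eq_zero_of_card_lt e (treeCoeff_eq_zero_of_card_lt k), ?_, fun v => ?_⟩
  · rw [ncard_support_blockSum e (treeCoeff_empty k), ncard_support_treeCoeff, Fintype.card_fin,
      Nat.add_sub_cancel, mul_comm]
  · have hq (b : Fin _ → Bool) : mlEval (blockSum e (treeCoeff k)) (pmPoint b) =
        ∑ i, pm (treeEval k fun a => b (e (i, a))) :=
      (evalML_blockSum e _).trans (sum_congr rfl fun i _ => evalML_treeCoeff k _)
    simp only [hq]
    have h := card_filter_blockwise_of_isBalanced e (isBalanced_treeEval k)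
      fun c => ∑ i, pm (c i) = v
    rwa [Fintype.card_fin, Fintype.card_fin] at h

theorem stmt18 (s d : ℕ) (hs : 1 ≤ s) (hd : 1 ≤ d) :
    ∃ (n : ℕ) (q : Finset (Fin n) → ℝ),
      (∀ S : Finset (Fin n), d < S.card → q S = 0) ∧
      {S : Finset (Fin n) | q S ≠ 0}.ncard = 4 ^ (d - 1) * s ∧
      ∀ v : ℝ,
        2 ^ s * (Finset.univ.filter fun b : Fin n → Bool =>
            mlEval q (pmPoint b) = v).card =
        2 ^ n * (Finset.univ.filter fun b : Fin s → Bool =>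
            (∑ i : Fin s, (if b i then (1 : ℝ) else -1)) = v).card :=
  stmt18_general s d hd
end
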